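/- arXiv:2204.07448 — 8 statements merged into one kernel-verified Lean document; each statement's English description precedes it below -/
import Mathlib

section
/- Let X be a compact metric space, A a closed subalgebra of C(X) containing the constants, R the equivalence relation defined by A, and π : X → X/R the quotient map. Then for every closed set F ⊆ X, the saturation r(F) = ⋃_{x∈F} r(x) is closed in X; consequently π is a closed map. -/
open scoped BigOperators

universe u

variable {X : Type u}

def sepSetoid [TopologicalSpace X] (A : Subalgebra ℝ C(X, ℝ)) : Setoid X :=
  ⟨fun a b => ∀ f ∈ A, f a = f b,
   ⟨fun _ _ _ => rfl, fun h f hf => (h f hf).symm, fun h1 h2 f hf => (h1 f hf).trans (h2 f hf)⟩⟩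

def algRel [TopologicalSpace X] (A : Subalgebra ℝ C(X, ℝ)) (a b : X) : Prop :=
  ∀ f ∈ A, f a = f b

def IsBoltFrom (R S : X → X → Prop) {n : ℕ} (x : Fin n → X) : Prop :=
  ∀ i : ℕ, ∀ h : i + 1 < n,
    x ⟨i, by omega⟩ ≠ x ⟨i + 1, h⟩ ∧
    (if i % 2 = 0 then R else S) (x ⟨i, by omega⟩) (x ⟨i + 1, h⟩)

def IsBolt (R S : X → X → Prop) {n : ℕ} (x : Fin n → X) : Prop :=
  IsBoltFrom R S x ∨ IsBoltFrom S R x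

def IsClosedBolt (R S : X → X → Prop) {n : ℕ} (x : Fin n → X) : Prop :=
  ∃ hn : 0 < n, IsBolt R S (Fin.snoc x (x ⟨0, hn⟩))

def IsInfBoltFrom (R S : X → X → Prop) (x : ℕ → X) : Prop :=
  ∀ i : ℕ, x i ≠ x (i + 1) ∧ (if i % 2 = 0 then R else S) (x i) (x (i + 1))

def IsInfBolt (R S : X → X → Prop) (x : ℕ → X) : Prop :=
  IsInfBoltFrom R S x ∨ IsInfBoltFrom S R x

def sumSet [TopologicalSpace X] (A₁ A₂ : Subalgebra ℝ C(X, ℝ)) : Set C(X, ℝ) :=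
  {u | ∃ v₁ ∈ A₁, ∃ v₂ ∈ A₂, u = v₁ + v₂}

def ExtremalFin [TopologicalSpace X] [CompactSpace X] (w : C(X, ℝ)) {n : ℕ} (x : Fin n → X) : Prop :=
  (∀ i, w (x i) = (-1 : ℝ) ^ (i : ℕ) * ‖w‖) ∨ (∀ i, w (x i) = (-1 : ℝ) ^ ((i : ℕ) + 1) * ‖w‖)

def ExtremalSeq [TopologicalSpace X] [CompactSpace X] (w : C(X, ℝ)) (x : ℕ → X) : Prop :=
  (∀ i, w (x i) = (-1 : ℝ) ^ i * ‖w‖) ∨ (∀ i, w (x i) = (-1 : ℝ) ^ (i + 1) * ‖w‖)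

noncomputable def ssint {α : Type*} [MeasurableSpace α] (μ : MeasureTheory.SignedMeasure α) (g : α → ℝ) : ℝ :=
  (∫ a, g a ∂μ.toJordanDecomposition.posPart) - ∫ a, g a ∂μ.toJordanDecomposition.negPart

def measSupport {α : Type*} [TopologicalSpace α] [MeasurableSpace α] (m : MeasureTheory.Measure α) : Set α :=
  {x | ∀ U : Set α, IsOpen U → x ∈ U → 0 < m U}

/-!
The relation `x ~ y :⇔ ∀ f ∈ A, f x = f y` is an intersection of the closed sets
`{(x, y) | f x = f y}`, hence closed in `X × X`. The saturation of a closed `F` is the image of the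
closed set `(F × X) ∩ {~}` under the second projection, which is a closed map because `X` is compact.
The quotient map is closed since the preimage of the image of `F` is exactly this saturation.
-/

theorem isClosed_setOf_forall_apply_eq {X Y : Type*} [TopologicalSpace X] [TopologicalSpace Y]
    [T2Space Y] (S : Set C(X, Y)) : IsClosed {p : X × X | ∀ f ∈ S, f p.1 = f p.2} := by
  simp only [Set.ofPred_forall]
  exact isClosed_biInter fun f _ => isClosed_eq (by fun_prop) (by fun_prop)

theorem IsClosed.setOf_exists_rel {X Y : Type*} [TopologicalSpace X] [TopologicalSpace Y]
    [CompactSpace X] {R : X → Y → Prop} (hR : IsClosed {p : X × Y | R p.1 p.2}) {F : Set X}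
    (hF : IsClosed F) : IsClosed {y | ∃ x ∈ F, R x y} := by
  have h : {y | ∃ x ∈ F, R x y} = Prod.snd '' (F ×ˢ Set.univ ∩ {p : X × Y | R p.1 p.2}) := by
    ext y
    simp
  rw [h]
  exact isClosedMap_snd_of_compactSpace _ ((hF.prod isClosed_univ).inter hR)

theorem Quotient.isClosedMap_mk_of_isClosed_saturation {X : Type*} [TopologicalSpace X]
    {s : Setoid X} (h : ∀ F : Set X, IsClosed F → IsClosed {y | ∃ x ∈ F, s x y}) :
    IsClosedMap (Quotient.mk s) := by
  intro F hF
  rw [← isQuotientMap_quotient_mk'.isClosed_preimage]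
  have hsat : Quotient.mk s ⁻¹' (Quotient.mk s '' F) = {y | ∃ x ∈ F, s x y} := by
    ext y
    simp only [Set.mem_preimage, Set.mem_image, Quotient.eq, Set.mem_ofPred_eq]
  exact hsat ▸ h F hF

theorem stmt1_general [MetricSpace X] [CompactSpace X] (A : Subalgebra ℝ C(X, ℝ)) :
    (∀ F : Set X, IsClosed F → IsClosed {y : X | ∃ x ∈ F, ∀ f ∈ A, f x = f y}) ∧
    IsClosedMap (Quotient.mk (sepSetoid A)) := by
  have hsat : ∀ F : Set X, IsClosed F → IsClosed {y : X | ∃ x ∈ F, ∀ f ∈ A, f x = f y} :=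
    fun _ hF => (isClosed_setOf_forall_apply_eq (A : Set C(X, ℝ))).setOf_exists_rel hF
  exact ⟨hsat, Quotient.isClosedMap_mk_of_isClosed_saturation hsat⟩

theorem stmt1 [MetricSpace X] [CompactSpace X] (A : Subalgebra ℝ C(X, ℝ))
    (hA : IsClosed (A : Set C(X, ℝ))) :
    (∀ F : Set X, IsClosed F → IsClosed {y : X | ∃ x ∈ F, ∀ f ∈ A, f x = f y}) ∧
    IsClosedMap (Quotient.mk (sepSetoid A)) :=
  stmt1_general A
end

section
/- Let π be a closed continuous surjective map from a metric space X onto a topological space Y. If the boundary of π⁻¹(y) is compact for every y ∈ Y, then Y is metrizable. -/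
open scoped BigOperators

universe u

variable {X : Type u}

/-!
Deleting from every fibre its interior, except for one chosen point `g y`, leaves a closed set `S`
on which `π` restricts to a perfect surjection: its fibres `frontier (π ⁻¹' {y}) ∪ {g y}` are
compact. For a perfect surjection the sets `N_r(y) = {z | π ⁻¹' {z} ⊆ thickening r (π ⁻¹' {y})}`
form a neighbourhood basis at `y`, and compactness of `π ⁻¹' {y}` together with closedness of `π`
gives Frink's condition: for every `ε > 0` there is `δ > 0` such that `N_δ(y) ∩ N_δ(z) ≠ ∅`
forces `N_δ(z) ⊆ N_ε(y)`. Frink's metrization theorem then makes `Y` pseudometrizable, and `Y`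
is T₁ because `π` is closed.
-/

open Set Filter Topology Metric TopologicalSpace
open scoped SetRel

theorem TopologicalSpace.pseudoMetrizableSpace_of_entourages {Y : Type*} [t : TopologicalSpace Y]
    (W : ℕ → SetRel Y Y) (hrefl : ∀ n y, (y, y) ∈ W n)
    (hsymm : ∀ n y z, (y, z) ∈ W n → (z, y) ∈ W n) (hcomp : ∀ n, W (n + 1) ○ W (n + 1) ⊆ W n)
    (hnhds : ∀ y, (𝓝 y).HasBasis (fun _ => True) fun n => {z | (y, z) ∈ W n}) :
    PseudoMetrizableSpace Y := by
  have hanti : Antitone W := antitone_nat_of_succ_le fun n ⟨y, z⟩ hyz =>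
    hcomp n ⟨z, hyz, hrefl _ z⟩
  have hW : (⨅ n, 𝓟 (W n)).HasBasis (fun _ => True) W := (HasAntitoneBasis.iInf_principal hanti).1
  let core : UniformSpace.Core Y := .mk' (⨅ n, 𝓟 (W n))
    (fun r hr y => by obtain ⟨n, -, hn⟩ := hW.mem_iff.1 hr; exact hn (hrefl n y))
    (fun r hr => by
      obtain ⟨n, -, hn⟩ := hW.mem_iff.1 hr
      exact hW.mem_iff.2 ⟨n, trivial, fun p hp => hn (hsymm n _ _ hp)⟩)
    (fun r hr => by
      obtain ⟨n, -, hn⟩ := hW.mem_iff.1 hr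
      exact ⟨W (n + 1), hW.mem_of_mem trivial, (hcomp n).trans hn⟩)
  let u : UniformSpace Y :=
    { core with
      toTopologicalSpace := t
      nhds_eq_comap_uniformity := fun y => (hnhds y).eq_of_same_basis (hW.comap (Prod.mk y)) }
  exact ⟨u, rfl, hW.isCountablyGenerated⟩

theorem exists_lt_of_frink {Y : Type*} (U : ℕ → Y → Set Y)
    (hanti : ∀ y, Antitone (U · y))
    (hfrink : ∀ y n, ∃ m, ∀ z, (U m y ∩ U m z).Nonempty → U m z ⊆ U n y) (y : Y) (n : ℕ) :
    ∃ m, n < m ∧ ∀ z, (U m y ∩ U m z).Nonempty → U m z ⊆ U n y := by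
  obtain ⟨m, hm⟩ := hfrink y n
  refine ⟨max m (n + 1), by omega, fun z hz => ?_⟩
  have hle := le_max_left m (n + 1)
  exact (hanti z hle).trans (hm z (hz.mono (inter_subset_inter (hanti y hle) (hanti z hle))))

theorem TopologicalSpace.pseudoMetrizableSpace_of_frink {Y : Type*} [TopologicalSpace Y]
    (U : ℕ → Y → Set Y) (hanti : ∀ y, Antitone (U · y))
    (hbasis : ∀ y, (𝓝 y).HasBasis (fun _ => True) (U · y))
    (hfrink : ∀ y n, ∃ m, ∀ z, (U m y ∩ U m z).Nonempty → U m z ⊆ U n y) :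
    PseudoMetrizableSpace Y := by
  choose m hlt hm using exists_lt_of_frink U hanti hfrink
  set k : Y → ℕ → ℕ := fun y j => (m y)^[j] 0
  have hk_succ : ∀ y j, k y (j + 1) = m y (k y j) := fun y j =>
    Function.iterate_succ_apply' _ _ _
  have hk_ge : ∀ y j, j ≤ k y j := fun y j => by
    induction j with
    | zero => exact Nat.zero_le _
    | succ j ih => rw [hk_succ]; exact (Nat.succ_le_succ ih).trans (hlt _ _)
  have hmem : ∀ y n, y ∈ U n y := fun y n => mem_of_mem_nhds ((hbasis y).mem_of_mem trivial)
  refine pseudoMetrizableSpace_of_entourages (fun j => ⋃ y, U (k y j) y ×ˢ U (k y j) y)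
    (fun j y => mem_iUnion.2 ⟨y, hmem _ _, hmem _ _⟩) ?_ ?_ ?_
  · intro j y z h
    obtain ⟨w, hy, hz⟩ := mem_iUnion.1 h
    exact mem_iUnion.2 ⟨w, hz, hy⟩
  · rintro j ⟨u, w⟩ ⟨v, huv, hvw⟩
    obtain ⟨y₁, hu, hv₁⟩ := mem_iUnion.1 huv
    obtain ⟨y₂, hv₂, hw⟩ := mem_iUnion.1 hvw
    -- the centre with the larger index is absorbed by the other one
    have hstar : ∀ {a b : Y}, v ∈ U (k a (j + 1)) a → v ∈ U (k b (j + 1)) b →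
        k a (j + 1) ≤ k b (j + 1) → U (k b (j + 1)) b ⊆ U (k a j) a := by
      intro a b ha hb hle
      rw [hk_succ a j] at ha hle
      exact (hanti b hle).trans (hm a _ b ⟨v, ha, hanti b hle hb⟩)
    have hsucc : ∀ a, U (k a (j + 1)) a ⊆ U (k a j) a := fun a =>
      hanti a (hk_succ a j ▸ (hlt a _).le)
    rcases le_total (k y₁ (j + 1)) (k y₂ (j + 1)) with hle | hle
    · exact mem_iUnion.2 ⟨y₁, hsucc y₁ hu, hstar hv₁ hv₂ hle hw⟩
    · exact mem_iUnion.2 ⟨y₂, hstar hv₂ hv₁ hle hu, hsucc y₂ hw⟩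
  · intro y
    refine (hbasis y).to_hasBasis (fun n _ => ⟨m y n, trivial, ?_⟩)
      (fun j _ => ⟨k y j, trivial, fun z hz => mem_iUnion.2 ⟨y, hmem _ _, hz⟩⟩)
    intro z hz
    obtain ⟨w, hyw, hzw⟩ := mem_iUnion.1 hz
    have hle : m y n ≤ k w (m y n) := hk_ge _ _
    exact hm y n w ⟨y, hmem _ _, hanti w hle hyw⟩ (hanti w hle hzw)

section ProperMap

variable {Y : Type*} [PseudoMetricSpace X] [TopologicalSpace Y] {π : X → Y}

theorem IsClosedMap.exists_image_thickening_subset_kernImage (hcl : IsClosedMap π)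
    (hc : Continuous π) {s : Set Y} (hK : IsCompact (π ⁻¹' s)) {U : Set X} (hU : IsOpen U)
    (hsU : π ⁻¹' s ⊆ U) : ∃ δ > 0, π '' thickening δ (π ⁻¹' s) ⊆ kernImage π U := by
  have hopen : IsOpen (π ⁻¹' kernImage π U) :=
    (isClosedMap_iff_kernImage.1 hcl hU).preimage hc
  obtain ⟨δ, hδ, hsub⟩ := hK.exists_thickening_subset_open hopen
    (preimage_mono (subset_kernImage_iff.2 hsU))
  exact ⟨δ, hδ, image_subset_iff.2 hsub⟩

theorem IsProperMap.hasBasis_nhds_kernImage_thickening (hπ : IsProperMap π)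
    (hs : Function.Surjective π) (y : Y) :
    (𝓝 y).HasBasis (fun δ : ℝ => 0 < δ) fun δ => kernImage π (thickening δ (π ⁻¹' {y})) := by
  refine ⟨fun t => ⟨fun ht => ?_, fun ⟨δ, hδ, hδt⟩ => mem_of_superset ?_ hδt⟩⟩
  · have hpre : π ⁻¹' t ∈ 𝓝ˢ (π ⁻¹' {y}) := by
      rw [← hπ.isClosedMap.comap_nhds_eq hπ.continuous]
      exact preimage_mem_comap ht
    obtain ⟨δ, hδ, hsub⟩ :=
      (hasBasis_nhdsSet_thickening (hπ.isCompact_preimage isCompact_singleton)).mem_iff.1 hpre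
    refine ⟨δ, hδ, (kernImage_mono hsub).trans fun z hz => ?_⟩
    obtain ⟨x, rfl⟩ := hs z
    exact hz rfl
  · exact (isClosedMap_iff_kernImage.1 hπ.isClosedMap isOpen_thickening).mem_nhds
      fun x hx => self_subset_thickening hδ _ hx

theorem IsProperMap.exists_kernImage_thickening_subset (hπ : IsProperMap π)
    (hs : Function.Surjective π) (y : Y) {ε : ℝ} (hε : 0 < ε) :
    ∃ δ > 0, ∀ r ≤ δ, ∀ z, (kernImage π (thickening r (π ⁻¹' {y})) ∩
        kernImage π (thickening r (π ⁻¹' {z}))).Nonempty →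
      kernImage π (thickening r (π ⁻¹' {z})) ⊆ kernImage π (thickening ε (π ⁻¹' {y})) := by
  obtain ⟨δ, hδ, hδε⟩ := hπ.isClosedMap.exists_image_thickening_subset_kernImage hπ.continuous
    (hπ.isCompact_preimage isCompact_singleton) isOpen_thickening
    (self_subset_thickening (half_pos hε) _)
  refine ⟨min (δ / 2) (ε / 2), by positivity, fun r hr z ⟨v, hvy, hvz⟩ => ?_⟩
  obtain ⟨q, rfl⟩ := hs v
  obtain ⟨p, hpz, hqp⟩ := mem_thickening_iff.1 (hvz rfl)
  -- through `q`, the fibres of `y` and `z` come within `2 r ≤ δ` of each other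
  have hp : p ∈ thickening δ (π ⁻¹' {y}) := by
    refine thickening_mono (by linarith [min_le_left (δ / 2) (ε / 2)]) _
      (thickening_thickening_subset r r _ (mem_thickening_iff.2 ⟨q, hvy rfl, ?_⟩))
    rwa [dist_comm]
  have hz : π ⁻¹' {z} ⊆ thickening (ε / 2) (π ⁻¹' {y}) := fun x hx =>
    hδε ⟨p, hp, hpz⟩ hx
  calc kernImage π (thickening r (π ⁻¹' {z}))
      ⊆ kernImage π (thickening r (thickening (ε / 2) (π ⁻¹' {y}))) :=
        kernImage_mono (thickening_subset_of_subset r hz)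
    _ ⊆ kernImage π (thickening (r + ε / 2) (π ⁻¹' {y})) :=
        kernImage_mono (thickening_thickening_subset _ _ _)
    _ ⊆ kernImage π (thickening ε (π ⁻¹' {y})) :=
        kernImage_mono (thickening_mono (by linarith [min_le_right (δ / 2) (ε / 2)]) _)

theorem IsProperMap.pseudoMetrizableSpace (hπ : IsProperMap π) (hs : Function.Surjective π) :
    PseudoMetrizableSpace Y := by
  refine pseudoMetrizableSpace_of_frink
    (fun n y => kernImage π (thickening (1 / ((n : ℝ) + 1)) (π ⁻¹' {y})))
    (fun y m n hmn => kernImage_mono (thickening_mono (Nat.one_div_le_one_div hmn) _))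
    (fun y => (hπ.hasBasis_nhds_kernImage_thickening hs y).to_hasBasis
      (fun δ hδ => ?_) fun n _ => ⟨_, Nat.one_div_pos_of_nat, subset_rfl⟩) fun y n => ?_
  · obtain ⟨n, hn⟩ := exists_nat_one_div_lt hδ
    exact ⟨n, trivial, kernImage_mono (thickening_mono hn.le _)⟩
  · obtain ⟨δ, hδ, hfrink⟩ := hπ.exists_kernImage_thickening_subset hs y
      (Nat.one_div_pos_of_nat (n := n))
    obtain ⟨m, hm⟩ := exists_nat_one_div_lt hδ
    exact ⟨m, hfrink _ hm.le⟩

end ProperMap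

section FrontierReduction

variable {Y : Type*} [TopologicalSpace X] [TopologicalSpace Y] {π : X → Y}

theorem IsClosedMap.t1Space [T1Space X] (hcl : IsClosedMap π) (hs : Function.Surjective π) :
    T1Space Y :=
  ⟨fun y => by
    obtain ⟨x, rfl⟩ := hs y
    simpa using hcl _ (isClosed_singleton (x := x))⟩

variable [T1Space Y] {g : Y → X}

theorem inter_fiber_subset_insert_frontier (hc : Continuous π) (hg : ∀ y, π (g y) = y) (y : Y) :
    (⋃ w, insert (g w) (frontier (π ⁻¹' {w}))) ∩ π ⁻¹' {y} ⊆
      insert (g y) (frontier (π ⁻¹' {y})) := by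
  rintro x ⟨hx, hxy⟩
  obtain ⟨w, rfl | hw⟩ := mem_iUnion.1 hx
  · rw [← show π (g w) = y from hxy, hg]
    exact mem_insert _ _
  · obtain rfl : π x = w := (isClosed_singleton.preimage hc).frontier_subset hw
    rw [← show π x = y from hxy]
    exact Or.inr hw

theorem isClosed_iUnion_insert_frontier_fiber [T1Space X] (hc : Continuous π)
    (hg : ∀ y, π (g y) = y) : IsClosed (⋃ w, insert (g w) (frontier (π ⁻¹' {w}))) := by
  refine isClosed_of_closure_subset fun x hx => mem_iUnion.2 ⟨π x, ?_⟩
  by_cases hfr : x ∈ frontier (π ⁻¹' {π x})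
  · exact Or.inr hfr
  have hint : x ∈ interior (π ⁻¹' {π x}) := by
    by_contra h
    exact hfr ⟨subset_closure rfl, h⟩
  have hsub : interior (π ⁻¹' {π x}) ∩ ⋃ w, insert (g w) (frontier (π ⁻¹' {w})) ⊆ {g (π x)} := by
    rintro u ⟨hu, hu'⟩
    obtain ⟨w, rfl | hw⟩ := mem_iUnion.1 hu'
    · have hw : π (g w) = π x := interior_subset (s := π ⁻¹' {π x}) hu
      rw [← hg w, hw]
      rfl
    · have hwu : π u = w := (isClosed_singleton.preimage hc).frontier_subset hw
      have hux : π u = π x := interior_subset (s := π ⁻¹' {π x}) hu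
      rw [← hwu, hux] at hw
      exact absurd hu hw.2
  have hx' : x ∈ closure {g (π x)} := closure_mono hsub (isOpen_interior.inter_closure ⟨hint, hx⟩)
  rw [closure_singleton, mem_singleton_iff] at hx'
  exact hx' ▸ mem_insert _ _

end FrontierReduction

theorem stmt2 [MetricSpace X] {Y : Type*} [TopologicalSpace Y] (π : X → Y)
    (hc : Continuous π) (hs : Function.Surjective π) (hcl : IsClosedMap π)
    (hb : ∀ y : Y, IsCompact (frontier (π ⁻¹' {y}))) :
    TopologicalSpace.MetrizableSpace Y := by
  have : T1Space Y := hcl.t1Space hs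
  set g := Function.surjInv hs
  have hg : ∀ y, π (g y) = y := Function.surjInv_eq hs
  set S := ⋃ w, insert (g w) (frontier (π ⁻¹' {w}))
  have hS : IsClosed S := isClosed_iUnion_insert_frontier_fiber hc hg
  have hproper : IsProperMap (π ∘ ((↑) : S → X)) := by
    refine isProperMap_iff_isClosedMap_and_compact_fibers.2
      ⟨hc.comp continuous_subtype_val, hcl.comp hS.isClosedEmbedding_subtypeVal.isClosedMap, fun y => ?_⟩
    rw [Subtype.isCompact_iff, preimage_comp, Subtype.image_preimage_coe]
    exact ((hb y).insert (g y)).of_isClosed_subset (hS.inter (isClosed_singleton.preimage hc))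
      (inter_fiber_subset_insert_frontier hc hg y)
  have hsurj : Function.Surjective (π ∘ ((↑) : S → X)) := fun y =>
    ⟨⟨g y, mem_iUnion.2 ⟨y, mem_insert _ _⟩⟩, hg y⟩
  have := hproper.pseudoMetrizableSpace hsurj
  infer_instance
end

section
/- Let X be a compact metric space, A a closed subalgebra of C(X) containing the constants, X₁ = X/R the quotient by the relation defined by A, and s : X → X₁ the quotient map. Then A = { g ∘ s : g ∈ C(X₁) }. -/
open scoped BigOperators

universe u

variable {X : Type u}

def descend [TopologicalSpace X] (A : Subalgebra ℝ C(X, ℝ)) (f : C(X, ℝ)) (hf : f ∈ A) :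
    Quotient (sepSetoid A) → ℝ :=
  Quotient.lift (f : X → ℝ) (fun _ _ h => (show ∀ u ∈ A, u _ = u _ from h) f hf)

theorem stmt4 [MetricSpace X] [CompactSpace X] (A : Subalgebra ℝ C(X, ℝ))
    (hA : IsClosed (A : Set C(X, ℝ))) :
    (A : Set C(X, ℝ)) =
      {F : C(X, ℝ) | ∃ g : C(Quotient (sepSetoid A), ℝ),
        ∀ x : X, F x = g (Quotient.mk (sepSetoid A) x)} := by
  classical
  -- descend a member of A to the quotient
  have lift_cont : ∀ (f : C(X, ℝ)) (hf : f ∈ A),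
      Continuous (descend A f hf) :=
    fun f hf => f.continuous.quotient_lift _
  haveI : T2Space (Quotient (sepSetoid A)) := by
    constructor
    intro p q hpq
    induction p using Quotient.inductionOn with
    | h x =>
    induction q using Quotient.inductionOn with
    | h y =>
    have hxy : ¬ (∀ f ∈ A, f x = f y) := fun h => hpq (Quotient.sound h)
    push_neg at hxy
    obtain ⟨f, hf, hne⟩ := hxy
    exact separated_by_continuous (lift_cont f hf) hne
  set sMap : C(X, Quotient (sepSetoid A)) :=
    ⟨Quotient.mk (sepSetoid A), continuous_quotient_mk'⟩ with hsMap
  let φ := ContinuousMap.compRightAlgHom ℝ ℝ sMap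
  let B : Subalgebra ℝ C(Quotient (sepSetoid A), ℝ) := A.comap φ
  have hBclosed : IsClosed (B : Set C(Quotient (sepSetoid A), ℝ)) :=
    hA.preimage (ContinuousMap.compRightAlgHom_continuous ℝ ℝ sMap)
  have hBsep : B.SeparatesPoints := by
    intro p q hpq
    induction p using Quotient.inductionOn with
    | h x =>
    induction q using Quotient.inductionOn with
    | h y =>
    have hxy : ¬ (∀ f ∈ A, f x = f y) := fun h => hpq (Quotient.sound h)
    push_neg at hxy
    obtain ⟨f, hf, hne⟩ := hxy
    refine ⟨_, ⟨⟨descend A f hf, lift_cont f hf⟩, ?_, rfl⟩, hne⟩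
    show φ _ ∈ A
    have : φ ⟨descend A f hf, lift_cont f hf⟩ = f := by
      ext x; rfl
    rwa [this]
  have hBtop : B = ⊤ := by
    have h := ContinuousMap.subalgebra_topologicalClosure_eq_top_of_separatesPoints B hBsep
    have hle : B.topologicalClosure ≤ B := by
      intro x hx
      have : x ∈ closure (B : Set C(Quotient (sepSetoid A), ℝ)) := hx
      rwa [hBclosed.closure_eq] at this
    exact top_le_iff.mp (h ▸ hle)
  ext F
  simp only [Set.mem_setOf_eq, SetLike.mem_coe]
  constructor
  · intro hF
    exact ⟨⟨descend A F hF, lift_cont F hF⟩, fun x => rfl⟩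
  · rintro ⟨g, hg⟩
    have hgB : g ∈ B := hBtop ▸ Algebra.mem_top
    have : φ g ∈ A := hgB
    have hFg : F = φ g := by ext x; exact hg x
    rwa [hFg]
end

section
/- Let X be a compact metric space, A₁, A₂ closed subalgebras of C(X) containing constants, f ∈ C(X), and u₀ ∈ A₁ + A₂. If there exists a closed bolt l = {x₁, …, x₂ₙ} with respect to A₁, A₂ that is extremal for f − u₀ (i.e., (f−u₀)(x_i) = (−1)^i‖f−u₀‖ for all i, or (f−u₀)(x_i) = (−1)^{i+1}‖f−u₀‖ for all i), then u₀ is a best uniform approximation to f from A₁ + A₂. -/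
open scoped BigOperators

universe u

variable {X : Type u}

lemma pairsum_aux (a : ℕ → ℝ) : ∀ n : ℕ, (∀ k < n, a (2*k) + a (2*k+1) = 0) →
    ∑ i ∈ Finset.range (2*n), a i = 0 := by
  intro n
  induction n with
  | zero => simp
  | succ n ih =>
    intro h
    have h2 : 2*(n+1) = (2*n + 1) + 1 := by ring
    rw [h2, Finset.sum_range_succ, Finset.sum_range_succ,
      ih (fun k hk => h k (by omega))]
    have := h n (by omega)
    linarith

lemma neg_one_sq_pow (i : ℕ) : (-1:ℝ)^i * (-1:ℝ)^i = 1 := by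
  rw [← pow_add, ← two_mul, pow_mul]; norm_num

theorem stmt11 [MetricSpace X] [CompactSpace X]
    (A₁ A₂ : Subalgebra ℝ C(X, ℝ))
    (hA₁ : IsClosed (A₁ : Set C(X, ℝ))) (hA₂ : IsClosed (A₂ : Set C(X, ℝ)))
    (f u₀ : C(X, ℝ)) (hu₀ : u₀ ∈ sumSet A₁ A₂)
    {n : ℕ} (hn : 0 < n) (x : Fin (2 * n) → X)
    (hbolt : IsClosedBolt (algRel A₁) (algRel A₂) x)
    (hext : ExtremalFin (f - u₀) x) :
    ∀ u ∈ sumSet A₁ A₂, ‖f - u₀‖ ≤ ‖f - u‖ := by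
  intro u hu
  obtain ⟨p₁, hp₁, p₂, hp₂, hu0eq⟩ := hu₀
  obtain ⟨q₁, hq₁, q₂, hq₂, hueq⟩ := hu
  have hm : 0 < 2*n := by omega
  set w := f - u₀ with hw
  set M := ‖w‖ with hM
  obtain ⟨hn', hb⟩ := hbolt
  set z : ℕ → X := fun i => x ⟨i % (2*n), Nat.mod_lt _ hm⟩ with hz
  have hzlt : ∀ i (hi : i < 2*n), z i = x ⟨i, hi⟩ := by
    intro i hi; simp only [hz]; congr 1; exact Fin.ext (Nat.mod_eq_of_lt hi)
  have hzm : z (2*n) = x ⟨0, hn'⟩ := by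
    simp only [hz]; congr 1; exact Fin.ext (Nat.mod_self (2*n))
  have hy : ∀ i (h : i < 2*n + 1), (Fin.snoc x (x ⟨0, hn'⟩) : Fin (2*n+1) → X) ⟨i, h⟩ = z i := by
    intro i h
    rcases Nat.lt_or_ge i (2*n) with hi | hi
    · have he : (⟨i, h⟩ : Fin (2*n+1)) = Fin.castSucc ⟨i, hi⟩ := rfl
      rw [he, Fin.snoc_castSucc, hzlt i hi]
    · have hi' : i = 2*n := by omega
      subst hi'
      have he : (⟨2*n, h⟩ : Fin (2*n+1)) = Fin.last (2*n) := rfl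
      rw [he, Fin.snoc_last, hzm]
  -- edge relations
  have hedge : (∀ i < 2*n, (if i % 2 = 0 then algRel A₁ else algRel A₂) (z i) (z (i+1)))
      ∨ (∀ i < 2*n, (if i % 2 = 0 then algRel A₂ else algRel A₁) (z i) (z (i+1))) := by
    rcases hb with hb | hb
    · left
      intro i hi
      have h1 : i + 1 < 2*n + 1 := by omega
      have := (hb i h1).2
      rwa [hy i (by omega), hy (i+1) h1] at this
    · right
      intro i hi
      have h1 : i + 1 < 2*n + 1 := by omega
      have := (hb i h1).2
      rwa [hy i (by omega), hy (i+1) h1] at this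
  -- generic alternating-sum vanishing lemmas
  have evenSum : ∀ g : C(X,ℝ), (∀ k < n, g (z (2*k)) = g (z (2*k+1))) →
      ∑ i ∈ Finset.range (2*n), (-1:ℝ)^i * g (z i) = 0 := by
    intro g hg
    apply pairsum_aux
    intro k hk
    have h1 : (-1:ℝ)^(2*k) = 1 := by rw [pow_mul]; norm_num
    have h2 : (-1:ℝ)^(2*k+1) = -1 := by rw [pow_succ, h1]; ring
    rw [h1, h2, hg k hk]; ring
  have oddSum : ∀ g : C(X,ℝ), (∀ k < n, g (z (2*k+1)) = g (z (2*k+2))) →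
      ∑ i ∈ Finset.range (2*n), (-1:ℝ)^i * g (z i) = 0 := by
    intro g hg
    have hper : (-1:ℝ)^(2*n) * g (z (2*n)) = (-1:ℝ)^0 * g (z 0) := by
      rw [hzm, hzlt 0 hm]
      have hpm : (-1:ℝ)^(2*n) = 1 := by rw [pow_mul]; norm_num
      rw [hpm]; norm_num
    obtain ⟨m', hm'⟩ : ∃ m', 2*n = m' + 1 := ⟨2*n - 1, by omega⟩
    have step : ∑ i ∈ Finset.range (2*n), (-1:ℝ)^i * g (z i)
        = ∑ i ∈ Finset.range (2*n), (-1:ℝ)^(i+1) * g (z (i+1)) := by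
      conv_lhs => rw [hm']
      rw [Finset.sum_range_succ' (fun i => (-1:ℝ)^i * g (z i)) m']
      conv_rhs => rw [hm']
      rw [Finset.sum_range_succ (fun i => (-1:ℝ)^(i+1) * g (z (i+1))) m']
      simp only [← hm']
      rw [hper]
    rw [step]
    apply pairsum_aux (fun i => (-1:ℝ)^(i+1) * g (z (i+1)))
    intro k hk
    show (-1:ℝ)^(2*k+1) * g (z (2*k+1)) + (-1:ℝ)^(2*k+1+1) * g (z (2*k+1+1)) = 0
    have h1 : (-1:ℝ)^(2*k+1) = -1 := by rw [pow_succ, pow_mul]; norm_num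
    have h2 : (-1:ℝ)^(2*k+1+1) = 1 := by rw [pow_succ, h1]; ring
    rw [h1, h2]
    have := hg k hk
    rw [show 2*k+1+1 = 2*k+2 from rfl, this]
    ring
  -- the alternating sum of any element of A₁ + A₂ vanishes
  have keyzero : ∀ g₁ ∈ A₁, ∀ g₂ ∈ A₂,
      ∑ i ∈ Finset.range (2*n), (-1:ℝ)^i * (g₁ (z i) + g₂ (z i)) = 0 := by
    intro g₁ hg₁ g₂ hg₂
    have hsplit : ∑ i ∈ Finset.range (2*n), (-1:ℝ)^i * (g₁ (z i) + g₂ (z i))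
        = (∑ i ∈ Finset.range (2*n), (-1:ℝ)^i * g₁ (z i))
          + ∑ i ∈ Finset.range (2*n), (-1:ℝ)^i * g₂ (z i) := by
      rw [← Finset.sum_add_distrib]; apply Finset.sum_congr rfl; intros; ring
    rw [hsplit]
    rcases hedge with he | he
    · have e1 : ∀ k < n, g₁ (z (2*k)) = g₁ (z (2*k+1)) := by
        intro k hk
        have := he (2*k) (by omega)
        rw [if_pos (by omega : (2*k) % 2 = 0)] at this
        exact this g₁ hg₁
      have e2 : ∀ k < n, g₂ (z (2*k+1)) = g₂ (z (2*k+2)) := by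
        intro k hk
        have := he (2*k+1) (by omega)
        rw [if_neg (by omega : ¬ (2*k+1) % 2 = 0)] at this
        exact this g₂ hg₂
      rw [evenSum g₁ e1, oddSum g₂ e2]; ring
    · have e1 : ∀ k < n, g₂ (z (2*k)) = g₂ (z (2*k+1)) := by
        intro k hk
        have := he (2*k) (by omega)
        rw [if_pos (by omega : (2*k) % 2 = 0)] at this
        exact this g₂ hg₂
      have e2 : ∀ k < n, g₁ (z (2*k+1)) = g₁ (z (2*k+2)) := by
        intro k hk
        have := he (2*k+1) (by omega)
        rw [if_neg (by omega : ¬ (2*k+1) % 2 = 0)] at this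
        exact this g₁ hg₁
      rw [evenSum g₂ e1, oddSum g₁ e2]; ring
  -- extremality: existence of a sign ε
  obtain ⟨ε, hε, hwe⟩ : ∃ ε : ℝ, (ε = 1 ∨ ε = -1) ∧
      ∀ i, ∀ hi : i < 2*n, ε * ((-1:ℝ)^i * w (z i)) = M := by
    rcases hext with h | h
    · refine ⟨1, Or.inl rfl, fun i hi => ?_⟩
      rw [hzlt i hi, h ⟨i, hi⟩]
      show 1 * ((-1:ℝ)^i * ((-1:ℝ)^i * ‖w‖)) = M
      rw [one_mul, ← mul_assoc, neg_one_sq_pow, one_mul]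
    · refine ⟨-1, Or.inr rfl, fun i hi => ?_⟩
      rw [hzlt i hi, h ⟨i, hi⟩]
      show -1 * ((-1:ℝ)^i * ((-1:ℝ)^(i+1) * ‖w‖)) = M
      have h2 : -1 * ((-1:ℝ)^i * ((-1:ℝ)^(i+1) * ‖w‖))
          = ((-1:ℝ)^i * (-1:ℝ)^i) * ‖w‖ := by rw [pow_succ]; ring
      rw [h2, neg_one_sq_pow, one_mul]
  -- the main sum computation
  have hfu : ∀ i, (f - u) (z i) = w (z i) - ((q₁ - p₁) (z i) + (q₂ - p₂) (z i)) := by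
    intro i
    simp only [hw, hueq, hu0eq, ContinuousMap.sub_apply, ContinuousMap.add_apply]
    ring
  have hzero := keyzero (q₁ - p₁) (A₁.sub_mem hq₁ hp₁) (q₂ - p₂) (A₂.sub_mem hq₂ hp₂)
  have hsum : ∑ i ∈ Finset.range (2*n), ε * ((-1:ℝ)^i * (f - u) (z i)) = (2*n) * M := by
    have hterm : ∀ i ∈ Finset.range (2*n), ε * ((-1:ℝ)^i * (f - u) (z i))
        = M - ε * ((-1:ℝ)^i * ((q₁ - p₁) (z i) + (q₂ - p₂) (z i))) := by
      intro i hi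
      rw [hfu i]
      have h1 : ε * ((-1:ℝ)^i * (w (z i) - ((q₁ - p₁) (z i) + (q₂ - p₂) (z i))))
          = ε * ((-1:ℝ)^i * w (z i))
            - ε * ((-1:ℝ)^i * ((q₁ - p₁) (z i) + (q₂ - p₂) (z i))) := by ring
      rw [h1, hwe i (Finset.mem_range.mp hi)]
    rw [Finset.sum_congr rfl hterm, Finset.sum_sub_distrib, ← Finset.mul_sum, hzero,
      Finset.sum_const, Finset.card_range, nsmul_eq_mul]
    push_cast
    ring
  have hex : ∃ i ∈ Finset.range (2*n), M ≤ ε * ((-1:ℝ)^i * (f - u) (z i)) := by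
    apply Finset.exists_le_of_sum_le (Finset.nonempty_range_iff.mpr (by omega))
    rw [hsum, Finset.sum_const, Finset.card_range, nsmul_eq_mul]
    apply le_of_eq
    push_cast
    ring
  obtain ⟨i, _, hi⟩ := hex
  have habs : ε * ((-1:ℝ)^i * (f - u) (z i)) ≤ |(f - u) (z i)| := by
    have h1 : |ε * ((-1:ℝ)^i * (f - u) (z i))| = |(f - u) (z i)| := by
      rw [abs_mul, abs_mul]
      have heps : |ε| = 1 := by rcases hε with h | h <;> simp [h]
      rw [heps, abs_pow, abs_neg, abs_one, one_pow, one_mul, one_mul]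
    calc ε * ((-1:ℝ)^i * (f - u) (z i)) ≤ |ε * ((-1:ℝ)^i * (f - u) (z i))| := le_abs_self _
    _ = _ := h1
  have hnorm : |(f - u) (z i)| ≤ ‖f - u‖ := by
    have := (f - u).norm_coe_le_norm (z i)
    rwa [Real.norm_eq_abs] at this
  calc ‖f - u₀‖ = M := rfl
  _ ≤ ‖f - u‖ := by linarith
end

section
/- Let X be a compact metric space, A₁, A₂ closed subalgebras of C(X) containing constants, f ∈ C(X), u₀ ∈ A₁ + A₂. If there exists an infinite bolt {x₁, x₂, …} extremal for f − u₀ (i.e., (f−u₀)(x_i) = (−1)^i‖f−u₀‖ for all i, or with the opposite signs), then u₀ is a best uniform approximation to f from A₁ + A₂. -/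
open scoped BigOperators

universe u

variable {X : Type u}

theorem keylem [MetricSpace X] [CompactSpace X] (g h : C(X, ℝ)) (y : ℕ → X)
    (heven : ∀ i, i % 2 = 0 → g (y i) = g (y (i + 1)))
    (hodd : ∀ i, i % 2 = 1 → h (y i) = h (y (i + 1)))
    (ε σ : ℝ) (hε : 0 < ε) (hσ : σ = 1 ∨ σ = -1)
    (hb : ∀ i, σ * ((-1 : ℝ) ^ i * (g (y i) + h (y i))) ≤ -ε) : False := by
  have hsum : ∀ m : ℕ, ∑ i ∈ Finset.range (2 * m), σ * ((-1:ℝ)^i * (g (y i) + h (y i)))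
      = σ * (h (y 0) - h (y (2 * m))) := by
    intro m
    induction m with
    | zero => simp
    | succ m ih =>
      have h2 : 2 * (m + 1) = (2 * m + 1) + 1 := by ring
      rw [h2, Finset.sum_range_succ, Finset.sum_range_succ, ih]
      have e1 : ((-1:ℝ)) ^ (2 * m) = 1 := Even.neg_one_pow (even_two_mul m)
      have e2 : ((-1:ℝ)) ^ (2 * m + 1) = -1 := by rw [pow_succ, e1]; ring
      have hg : g (y (2 * m)) = g (y (2 * m + 1)) := heven _ (by omega)
      have hh : h (y (2 * m + 1)) = h (y (2 * m + 1 + 1)) := hodd _ (by omega)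
      have h3 : 2 * m + 1 + 1 = 2 * (m + 1) := by ring
      rw [e1, e2, hg, hh, h3]
      ring
  obtain ⟨m, hm⟩ := exists_nat_gt ((2 * ‖h‖ + 1) / (2 * ε))
  have hle : ∑ i ∈ Finset.range (2 * m), σ * ((-1:ℝ)^i * (g (y i) + h (y i)))
      ≤ (2 * m : ℝ) * (-ε) := by
    calc ∑ i ∈ Finset.range (2*m), σ * ((-1:ℝ)^i * (g (y i) + h (y i)))
        ≤ ∑ _i ∈ Finset.range (2*m), (-ε) := Finset.sum_le_sum fun i _ => hb i
      _ = (2*m : ℝ) * (-ε) := by simp [mul_comm]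
  rw [hsum] at hle
  have hb1 : |h (y 0)| ≤ ‖h‖ := by
    simpa [Real.norm_eq_abs] using h.norm_coe_le_norm (y 0)
  have hb2 : |h (y (2*m))| ≤ ‖h‖ := by
    simpa [Real.norm_eq_abs] using h.norm_coe_le_norm (y (2*m))
  obtain ⟨hb1a, hb1b⟩ := abs_le.mp hb1
  obtain ⟨hb2a, hb2b⟩ := abs_le.mp hb2
  have hlow : -(2 * ‖h‖) ≤ σ * (h (y 0) - h (y (2 * m))) := by
    rcases hσ with rfl | rfl <;> nlinarith
  have hM : (2 * ‖h‖ + 1) < 2 * m * ε := by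
    rw [div_lt_iff₀ (by positivity)] at hm
    nlinarith
  nlinarith

theorem stmt12 [MetricSpace X] [CompactSpace X]
    (A₁ A₂ : Subalgebra ℝ C(X, ℝ))
    (hA₁ : IsClosed (A₁ : Set C(X, ℝ))) (hA₂ : IsClosed (A₂ : Set C(X, ℝ)))
    (f u₀ : C(X, ℝ)) (hu₀ : u₀ ∈ sumSet A₁ A₂)
    (x : ℕ → X)
    (hbolt : IsInfBolt (algRel A₁) (algRel A₂) x)
    (hext : ExtremalSeq (f - u₀) x) :
    ∀ u ∈ sumSet A₁ A₂, ‖f - u₀‖ ≤ ‖f - u‖ := by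
  intro u hu
  by_contra hcon
  push_neg at hcon
  obtain ⟨a₁, ha₁, a₂, ha₂, hu₀eq⟩ := hu₀
  obtain ⟨b₁, hb₁, b₂, hb₂, hueq⟩ := hu
  set w := f - u₀ with hw
  set v := u₀ - u with hv
  set c₁ := a₁ - b₁ with hc1
  set c₂ := a₂ - b₂ with hc2
  have hc₁ : c₁ ∈ A₁ := A₁.sub_mem ha₁ hb₁
  have hc₂ : c₂ ∈ A₂ := A₂.sub_mem ha₂ hb₂
  have hveq : v = c₁ + c₂ := by
    rw [hv, hu₀eq, hueq, hc1, hc2]; abel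
  set ε := ‖w‖ - ‖f - u‖ with hεdef
  have hε : 0 < ε := by simp only [hεdef, hw]; linarith
  have hfu : ∀ i, (f - u) (x i) = w (x i) + v (x i) := by
    intro i
    have : f - u = w + v := by rw [hw, hv]; abel
    rw [this]; simp
  have hbd : ∀ i, |(f - u) (x i)| ≤ ‖f - u‖ := fun i => by
    simpa [Real.norm_eq_abs] using (f - u).norm_coe_le_norm (x i)
  have hpow : ∀ i : ℕ, ((-1:ℝ))^i = 1 ∨ ((-1:ℝ))^i = -1 :=
    fun i => (Nat.even_or_odd i).imp (fun h => h.neg_one_pow) (fun h => h.neg_one_pow)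
  -- obtain sign σ with the key inequality
  obtain ⟨σ, hσ, hkey⟩ : ∃ σ : ℝ, (σ = 1 ∨ σ = -1) ∧
      ∀ i, σ * ((-1:ℝ)^i * v (x i)) ≤ -ε := by
    rcases hext with hext | hext
    · refine ⟨1, Or.inl rfl, fun i => ?_⟩
      have h1 := hext i
      have h2 := hbd i
      have h3 := hfu i
      obtain ⟨h2a, h2b⟩ := abs_le.mp h2
      rcases hpow i with hp | hp <;> rw [hp] at h1 ⊢ <;> nlinarith
    · refine ⟨-1, Or.inr rfl, fun i => ?_⟩
      have h1 := hext i
      have h2 := hbd i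
      have h3 := hfu i
      obtain ⟨h2a, h2b⟩ := abs_le.mp h2
      have hp1 : ((-1:ℝ))^(i+1) = -((-1:ℝ))^i := by rw [pow_succ]; ring
      rw [hp1] at h1
      rcases hpow i with hp | hp <;> rw [hp] at h1 ⊢ <;> nlinarith
  rcases hbolt with hbolt | hbolt
  · refine keylem c₁ c₂ x ?_ ?_ ε σ hε hσ ?_
    · intro i hi
      have := (hbolt i).2
      rw [if_pos hi] at this
      exact this c₁ hc₁
    · intro i hi
      have := (hbolt i).2
      rw [if_neg (by omega)] at this
      exact this c₂ hc₂
    · intro i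
      have hvi : c₁ (x i) + c₂ (x i) = v (x i) := by rw [hveq]; simp
      rw [hvi]; exact hkey i
  · refine keylem c₂ c₁ x ?_ ?_ ε σ hε hσ ?_
    · intro i hi
      have := (hbolt i).2
      rw [if_pos hi] at this
      exact this c₂ hc₂
    · intro i hi
      have := (hbolt i).2
      rw [if_neg (by omega)] at this
      exact this c₁ hc₁
    · intro i
      have hvi : c₂ (x i) + c₁ (x i) = v (x i) := by rw [hveq]; simp; ring
      rw [hvi]; exact hkey i
end

section
/- Let X be a compact metric space, A₁, A₂ closed subalgebras of C(X) containing constants, f ∈ C(X), and u₀ ∈ A₁ + A₂ a best uniform approximation to f from A₁ + A₂ with f ∉ closure(A₁+A₂). Then there exists a bolt {x₀, x₁, x₂, …} (closed or infinite) extremal for f − u₀, i.e., the values of f − u₀ at consecutive bolt points alternate between +‖f−u₀‖ and −‖f−u₀‖. -/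
/-!
Singer's duality gives a functional `Λ` on `C(X, ℝ)` with `‖Λ‖ ≤ 1` that annihilates `A₁ + A₂`
and satisfies `Λ w = ‖w‖` for `w = f - u₀`. Instead of the Jordan decomposition of the
representing measure we use the positive and negative variations `Λ⁺ g = sup {Λ h | 0 ≤ h ≤ g}`
and `Λ⁻ = (-Λ)⁺` directly, as additive functionals on the cone of nonnegative functions.
Since `‖Λ‖ ≤ 1` and `Λ 1 = 0`, `Λ⁺ (‖w‖ - w) = Λ⁻ (‖w‖ + w) = 0`, so `supp Λ⁺ ⊆ {w = ‖w‖}` and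
`supp Λ⁻ ⊆ {w = -‖w‖}`. As `Λ` vanishes on `A₁`, `Λ⁺` and `Λ⁻` agree on the nonnegative
elements of `A₁`. So if `A₁` separated some `x ∈ supp Λ⁺` from every point of `supp Λ⁻`, the
powers of a peak function of `A₁` at `x` would have `Λ⁺`-mass decaying more slowly than their
`Λ⁻`-mass, which is impossible. The same holds for `A₂` with `Λ⁺` and `Λ⁻` exchanged, so
alternating between the two supports produces an infinite extremal bolt.
-/

open scoped BigOperators

universe u

variable {X : Type u}

open Set Function Filter Topology
open scoped Pointwise

theorem Set.Icc_zero_add {α : Type*} [AddCommGroup α] [Lattice α] [IsOrderedAddMonoid α]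
    {a b : α} (ha : 0 ≤ a) (hb : 0 ≤ b) : Icc 0 (a + b) = Icc 0 a + Icc 0 b := by
  refine Subset.antisymm (fun h ⟨h0, hle⟩ => ?_) ?_
  · refine ⟨h ⊓ a, ⟨le_inf h0 ha, inf_le_right⟩, h - h ⊓ a, ⟨?_, ?_⟩, add_sub_cancel _ _⟩
    · exact sub_nonneg.mpr inf_le_left
    · rw [sub_inf, sub_self]
      exact sup_le hb (sub_le_iff_le_add'.mpr hle)
  · rintro _ ⟨h, ⟨h0, ha'⟩, k, ⟨k0, hb'⟩, rfl⟩
    exact ⟨add_nonneg h0 k0, add_le_add ha' hb'⟩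

section ContinuousFunctions

variable {Y : Type*} [TopologicalSpace Y]

structure IsPosFunctional (P : C(Y, ℝ) → ℝ) : Prop where
  map_add : ∀ f g : C(Y, ℝ), 0 ≤ f → 0 ≤ g → P (f + g) = P f + P g
  nonneg : ∀ f : C(Y, ℝ), 0 ≤ f → 0 ≤ P f
  map_smul : ∀ (c : ℝ) (f : C(Y, ℝ)), 0 ≤ c → 0 ≤ f → P (c • f) = c * P f

def posSupp (P : C(Y, ℝ) → ℝ) : Set Y :=
  {x | ∀ U : Set Y, IsOpen U → x ∈ U → ∃ g : C(Y, ℝ), 0 ≤ g ∧ support g ⊆ U ∧ 0 < P g}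

theorem isClosed_posSupp (P : C(Y, ℝ) → ℝ) : IsClosed (posSupp P) := by
  rw [← isOpen_compl_iff, isOpen_iff_forall_mem_open]
  intro x hx
  simp only [posSupp, mem_compl_iff, mem_ofPred_eq, not_forall] at hx
  obtain ⟨U, hU, hxU, hno⟩ := hx
  exact ⟨U, fun y hy hyP => hno (hyP U hU hy), hU, hxU⟩

namespace IsPosFunctional

variable {P : C(Y, ℝ) → ℝ}

theorem mono (hP : IsPosFunctional P) {f g : C(Y, ℝ)} (hf : 0 ≤ f) (hfg : f ≤ g) :
    P f ≤ P g := by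
  have h := hP.map_add f (g - f) hf (sub_nonneg.mpr hfg)
  rw [add_sub_cancel] at h
  linarith [hP.nonneg _ (sub_nonneg.mpr hfg)]

theorem map_zero (hP : IsPosFunctional P) : P 0 = 0 := by
  simpa using hP.map_smul 0 0 le_rfl le_rfl

theorem map_sum (hP : IsPosFunctional P) {ι : Type*} (s : Finset ι) (f : ι → C(Y, ℝ))
    (hf : ∀ i ∈ s, 0 ≤ f i) : P (∑ i ∈ s, f i) = ∑ i ∈ s, P (f i) := by
  classical
  induction s using Finset.induction_on with
  | empty => simpa using hP.map_zero
  | insert i s hi ih =>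
    have hf' : ∀ j ∈ s, 0 ≤ f j := fun j hj => hf j (Finset.mem_insert_of_mem hj)
    rw [Finset.sum_insert hi, Finset.sum_insert hi,
      hP.map_add _ _ (hf i (Finset.mem_insert_self i s)) (Finset.sum_nonneg hf'), ih hf']

variable [CompactSpace Y]

theorem map_le_div_mul_of_support_subset (hP : IsPosFunctional P) {g k : C(Y, ℝ)} (hg : 0 ≤ g)
    (hk : 0 ≤ k) {U : Set Y} (hgU : support g ⊆ U) {δ : ℝ} (hδ : 0 < δ)
    (hkU : ∀ z ∈ U, δ ≤ k z) : P g ≤ ‖g‖ / δ * P k := by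
  have hle : g ≤ (‖g‖ / δ) • k := ContinuousMap.le_def.mpr fun z => by
    by_cases hz : z ∈ U
    · calc g z ≤ ‖g‖ / δ * δ := by rw [div_mul_cancel₀ _ hδ.ne']; exact g.apply_le_norm z
        _ ≤ ‖g‖ / δ * k z := by gcongr; exact hkU z hz
    · rw [notMem_support.mp (mt (@hgU z) hz)]
      exact ContinuousMap.le_def.mp (smul_nonneg (by positivity) hk) z
  rw [← hP.map_smul _ _ (by positivity) hk]
  exact hP.mono hg hle

theorem posSupp_subset_of_map_eq_zero (hP : IsPosFunctional P) {b : C(Y, ℝ)} (hb : 0 ≤ b)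
    (hPb : P b = 0) : posSupp P ⊆ {x | b x = 0} := by
  intro x hx
  by_contra hbx
  have hbx : 0 < b x := lt_of_le_of_ne (hb x) (Ne.symm hbx)
  obtain ⟨g, hg, hgU, hPg⟩ :=
    hx {z | b x / 2 < b z} (isOpen_lt continuous_const b.continuous) (half_lt_self hbx)
  have := hP.map_le_div_mul_of_support_subset hg hb hgU (half_pos hbx) fun z hz => le_of_lt hz
  rw [hPb, mul_zero] at this
  linarith

variable [T2Space Y]

theorem map_eq_zero_of_eqOn_zero (hP : IsPosFunctional P) {g : C(Y, ℝ)} (hg : 0 ≤ g)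
    {V : Set Y} (hV : IsOpen V) (hPV : posSupp P ⊆ V) (hgV : EqOn g 0 V) : P g = 0 := by
  have hnull : ∀ z ∈ Vᶜ, ∃ U, IsOpen U ∧ z ∈ U ∧
      ∀ h : C(Y, ℝ), 0 ≤ h → support h ⊆ U → P h = 0 := by
    intro z hz
    have hzP : z ∉ posSupp P := fun h => hz (hPV h)
    simp only [posSupp, mem_ofPred_eq, not_forall, not_exists, not_and, not_lt] at hzP
    obtain ⟨U, hU, hzU, hle⟩ := hzP
    exact ⟨U, hU, hzU, fun h h0 hh => le_antisymm (hle h h0 hh) (hP.nonneg h h0)⟩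
  choose U hUo hzU hUnull using hnull
  obtain ⟨t, ht⟩ := hV.isClosed_compl.isCompact.elim_finite_subcover
    (fun z : (Vᶜ : Set Y) => U z z.2) (fun z => hUo z z.2)
    fun z hz => mem_iUnion.mpr ⟨⟨z, hz⟩, hzU z hz⟩
  obtain ⟨ρ, hρ⟩ := PartitionOfUnity.exists_isSubordinate hV.isClosed_compl
    (fun i : t => U i.1 i.1.2) (fun i => hUo _ _) fun z hz => by
      obtain ⟨i, hi, hzi⟩ := mem_iUnion₂.mp (ht hz)
      exact mem_iUnion.mpr ⟨⟨i, hi⟩, hzi⟩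
  have hρg : ∀ i, 0 ≤ ρ i * g := fun i z => mul_nonneg (ρ.nonneg i z) (hg z)
  have hsum : g = ∑ i, ρ i * g := by
    ext z
    simp only [ContinuousMap.coe_sum, Finset.sum_apply, ContinuousMap.mul_apply, ← Finset.sum_mul]
    by_cases hz : z ∈ V
    · simp [hgV hz]
    · rw [← finsum_eq_sum_of_fintype, ρ.sum_eq_one hz, one_mul]
  rw [hsum, hP.map_sum _ _ fun i _ => hρg i]
  refine Finset.sum_eq_zero fun i _ => hUnull i.1 i.1.2 _ (hρg i) ?_
  exact (support_mul_subset_left _ _).trans ((subset_tsupport _).trans (hρ i))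

theorem map_le_of_forall_posSupp_lt (hP : IsPosFunctional P) {g : C(Y, ℝ)} (hg : 0 ≤ g)
    {c : ℝ} (hc : 0 ≤ c) (hgc : ∀ x ∈ posSupp P, g x < c) : P g ≤ c * P 1 := by
  set g' : C(Y, ℝ) := (g - c • 1) ⊔ 0
  have hg' : 0 ≤ g' := le_sup_right
  have hPg' : P g' = 0 := hP.map_eq_zero_of_eqOn_zero hg'
    (isOpen_lt g.continuous continuous_const) hgc fun z (hz : g z < c) => by simp [g', hz.le]
  have hc1 : (0 : C(Y, ℝ)) ≤ c • 1 := smul_nonneg hc zero_le_one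
  have hle : g ≤ c • 1 + g' := fun z => by
    simpa [g'] using le_add_of_sub_left_le (le_max_left (g z - c) 0)
  calc P g ≤ P (c • 1 + g') := hP.mono hg hle
    _ = c * P 1 := by rw [hP.map_add _ _ hc1 hg', hP.map_smul c 1 hc zero_le_one, hPg', add_zero]

theorem posSupp_nonempty (hP : IsPosFunctional P) {g : C(Y, ℝ)} (hg : 0 ≤ g) (hPg : 0 < P g) :
    (posSupp P).Nonempty := by
  by_contra h
  have := hP.map_le_of_forall_posSupp_lt hg le_rfl (by simp [not_nonempty_iff_eq_empty.mp h])
  linarith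

end IsPosFunctional

theorem ContinuousMap.norm_smul_one_sub_nonneg [CompactSpace Y] (w : C(Y, ℝ)) :
    0 ≤ ‖w‖ • 1 - w :=
  fun x => by simpa using w.apply_le_norm x

theorem ContinuousMap.norm_smul_one_add_nonneg [CompactSpace Y] (w : C(Y, ℝ)) :
    0 ≤ ‖w‖ • 1 + w :=
  fun x => by simpa [add_comm] using neg_le_iff_add_nonneg.mp (w.neg_norm_le_apply x)

namespace ContinuousLinearMap

noncomputable def posVariation (Λ : C(Y, ℝ) →L[ℝ] ℝ) (f : C(Y, ℝ)) : ℝ :=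
  sSup (Λ '' Icc 0 f)

variable (Λ : C(Y, ℝ) →L[ℝ] ℝ) {f g : C(Y, ℝ)}

theorem posVariation_le (hf : 0 ≤ f) {B : ℝ} (hB : ∀ h ∈ Icc 0 f, Λ h ≤ B) :
    Λ.posVariation f ≤ B :=
  csSup_le ((nonempty_Icc.mpr hf).image Λ) (forall_mem_image.mpr hB)

theorem posVariation_smul {c : ℝ} (hc : 0 ≤ c) :
    Λ.posVariation (c • f) = c * Λ.posVariation f := by
  rcases hc.eq_or_lt with rfl | hc
  · simp [posVariation]
  have hIcc : c • Icc 0 f = Icc 0 (c • f) := by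
    simpa using (OrderIso.smulRight (β := C(Y, ℝ)) hc).image_Icc 0 f
  rw [posVariation, ← hIcc, image_smul_set, Real.sSup_smul_of_nonneg hc.le, smul_eq_mul,
    posVariation]

variable [CompactSpace Y]

theorem bddAbove_image_Icc_zero : BddAbove (Λ '' Icc 0 f) := by
  refine ⟨‖Λ‖ * ‖f‖, ?_⟩
  rintro _ ⟨h, ⟨h0, hf⟩, rfl⟩
  have hnorm : ‖h‖ ≤ ‖f‖ := (ContinuousMap.norm_le h (norm_nonneg f)).mpr fun y => by
    rw [Real.norm_eq_abs, abs_of_nonneg (ContinuousMap.le_def.mp h0 y)]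
    exact (ContinuousMap.le_def.mp hf y).trans (f.apply_le_norm y)
  exact (le_abs_self _).trans ((Λ.le_opNorm h).trans (by gcongr))

theorem le_posVariation {h : C(Y, ℝ)} (hh : h ∈ Icc 0 f) : Λ h ≤ Λ.posVariation f :=
  le_csSup Λ.bddAbove_image_Icc_zero (mem_image_of_mem Λ hh)

theorem posVariation_add (hf : 0 ≤ f) (hg : 0 ≤ g) :
    Λ.posVariation (f + g) = Λ.posVariation f + Λ.posVariation g := by
  rw [posVariation, Icc_zero_add hf hg, image_add]
  exact csSup_add ((nonempty_Icc.mpr hf).image Λ) Λ.bddAbove_image_Icc_zero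
    ((nonempty_Icc.mpr hg).image Λ) Λ.bddAbove_image_Icc_zero

theorem isPosFunctional_posVariation : IsPosFunctional Λ.posVariation where
  map_add _ _ hf hg := Λ.posVariation_add hf hg
  nonneg _ hf := by simpa using Λ.le_posVariation ⟨le_rfl, hf⟩
  map_smul _ _ hc _ := Λ.posVariation_smul hc

theorem posVariation_neg (hf : 0 ≤ f) : (-Λ).posVariation f = Λ.posVariation f - Λ f := by
  have himage : (-Λ) '' Icc 0 f = Λ '' Icc 0 f + {-Λ f} := by
    have hIcc : (f - ·) '' Icc 0 f = Icc 0 f := by simp [image_const_sub_Icc]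
    rw [add_singleton, image_image]
    nth_rw 1 [← hIcc]
    rw [image_image]
    congr 1
    funext h
    simp [sub_eq_add_neg]
  rw [posVariation, himage, csSup_add ((nonempty_Icc.mpr hf).image Λ) Λ.bddAbove_image_Icc_zero
    (singleton_nonempty (-Λ f)) bddAbove_singleton, csSup_singleton, posVariation, sub_eq_add_neg]

theorem two_mul_posVariation_one_le : 2 * Λ.posVariation 1 ≤ ‖Λ‖ + Λ 1 := by
  suffices Λ.posVariation 1 ≤ (‖Λ‖ + Λ 1) / 2 by linarith
  refine Λ.posVariation_le zero_le_one fun h ⟨h0, h1⟩ => ?_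
  have hnorm : ‖(2 : ℝ) • h - 1‖ ≤ 1 := (ContinuousMap.norm_le _ zero_le_one).mpr fun y => by
    have h0y : 0 ≤ h y := h0 y
    have h1y : h y ≤ 1 := h1 y
    simp only [ContinuousMap.sub_apply, ContinuousMap.smul_apply, ContinuousMap.one_apply,
      Real.norm_eq_abs, smul_eq_mul]
    exact abs_le.mpr ⟨by linarith, by linarith⟩
  have := (le_abs_self _).trans ((Λ.le_opNorm ((2 : ℝ) • h - 1)).trans
    (mul_le_of_le_one_right (norm_nonneg Λ) hnorm))
  rw [map_sub, map_smul, smul_eq_mul] at this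
  linarith

theorem posVariation_norm_smul_one_sub_eq_zero (hΛ : ‖Λ‖ ≤ 1) (hΛ1 : Λ 1 = 0) {w : C(Y, ℝ)}
    (hΛw : Λ w = ‖w‖) : Λ.posVariation (‖w‖ • 1 - w) = 0 := by
  set M := ‖w‖
  have hb := w.norm_smul_one_sub_nonneg
  have ha := w.norm_smul_one_add_nonneg
  have hsum : Λ.posVariation (M • 1 + w) + Λ.posVariation (M • 1 - w) =
      2 * M * Λ.posVariation 1 := by
    rw [← Λ.posVariation_add ha hb, add_add_sub_cancel, ← two_smul ℝ, smul_smul,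
      Λ.posVariation_smul (by positivity)]
  have hΛa : M ≤ Λ.posVariation (M • 1 + w) := by
    simpa [hΛ1, hΛw] using Λ.le_posVariation ⟨ha, le_rfl⟩
  have hP1 : M * (2 * Λ.posVariation 1) ≤ M :=
    mul_le_of_le_one_right (norm_nonneg w) (by linarith [Λ.two_mul_posVariation_one_le])
  linarith [Λ.isPosFunctional_posVariation.nonneg _ hb]

theorem posSupp_posVariation_subset (hΛ : ‖Λ‖ ≤ 1) (hΛ1 : Λ 1 = 0) {w : C(Y, ℝ)}
    (hΛw : Λ w = ‖w‖) : posSupp Λ.posVariation ⊆ {x | w x = ‖w‖} := fun x hx => by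
  have := Λ.isPosFunctional_posVariation.posSupp_subset_of_map_eq_zero
    w.norm_smul_one_sub_nonneg (Λ.posVariation_norm_smul_one_sub_eq_zero hΛ hΛ1 hΛw) hx
  simp only [mem_ofPred_eq, ContinuousMap.sub_apply, ContinuousMap.smul_apply,
    ContinuousMap.one_apply, smul_eq_mul, mul_one] at this
  exact (sub_eq_zero.mp this).symm

end ContinuousLinearMap

theorem Subalgebra.exists_nonneg_eq_zero_one_le_on (A : Subalgebra ℝ C(Y, ℝ)) {x : Y}
    {T : Set Y} (hT : IsCompact T) (hsep : ∀ y ∈ T, ¬ algRel A x y) :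
    ∃ q ∈ A, 0 ≤ q ∧ q x = 0 ∧ ∀ z ∈ T, 1 ≤ q z := by
  refine hT.induction_on (p := fun s => ∃ q ∈ A, 0 ≤ q ∧ q x = 0 ∧ ∀ z ∈ s, 1 ≤ q z)
    ⟨0, A.zero_mem, le_rfl, rfl, by simp⟩
    (fun s t hst ⟨q, hqA, hq0, hqx, hqt⟩ => ⟨q, hqA, hq0, hqx, fun z hz => hqt z (hst hz)⟩)
    (fun s t ⟨q, hqA, hq0, hqx, hqs⟩ ⟨q', hq'A, hq'0, hq'x, hq't⟩ =>
      ⟨q + q', add_mem hqA hq'A, add_nonneg hq0 hq'0, by simp [hqx, hq'x], fun z hz => ?_⟩) ?_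
  · rw [ContinuousMap.add_apply]
    rcases hz with hz | hz
    · linarith [hqs z hz, show 0 ≤ q' z from hq'0 z]
    · linarith [hq't z hz, show 0 ≤ q z from hq0 z]
  intro y hy
  obtain ⟨g, hgA, hgxy⟩ : ∃ g ∈ A, g x ≠ g y := by simpa [algRel] using hsep y hy
  set p : C(Y, ℝ) := (g - algebraMap ℝ C(Y, ℝ) (g x)) ^ 2
  have hp : ∀ z, p z = (g z - g x) ^ 2 := fun z => by simp [p, Algebra.algebraMap_eq_smul_one]
  have hpy : 0 < p y := by rw [hp]; exact sq_pos_iff.mpr (sub_ne_zero.mpr hgxy.symm)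
  refine ⟨{z | p y / 2 < p z}, mem_nhdsWithin_of_mem_nhds
    ((isOpen_lt continuous_const p.continuous).mem_nhds (half_lt_self hpy)), (2 / p y) • p,
    A.smul_mem (pow_mem (sub_mem hgA (A.algebraMap_mem _)) 2) _,
    smul_nonneg (by positivity) fun z => by simp [hp, sq_nonneg], by simp [hp], fun z hz => ?_⟩
  rw [ContinuousMap.smul_apply, smul_eq_mul, div_mul_eq_mul_div, one_le_div hpy]
  linarith [show p y / 2 < p z from hz]

theorem Subalgebra.exists_peak_of_isCompact [CompactSpace Y] (A : Subalgebra ℝ C(Y, ℝ)) {x : Y}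
    {T : Set Y} (hT : IsCompact T) (hsep : ∀ y ∈ T, ¬ algRel A x y) :
    ∃ r ∈ A, 0 ≤ r ∧ r x = 1 ∧ ∃ θ : ℝ, 0 ≤ θ ∧ θ < 1 ∧ ∀ z ∈ T, r z < θ := by
  obtain ⟨q, hqA, hq0, hqx, hqT⟩ := A.exists_nonneg_eq_zero_one_le_on hT hsep
  set c := (‖q‖ + 1)⁻¹
  have hc : 0 < c := by positivity
  have hc1 : c ≤ 1 := inv_le_one_of_one_le₀ (by linarith [norm_nonneg q])
  have hcq : ∀ z, c * q z ≤ 1 := fun z => by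
    rw [← div_eq_inv_mul, div_le_one (by positivity)]
    linarith [q.apply_le_norm z]
  refine ⟨1 - c • q, sub_mem A.one_mem (A.smul_mem hqA c), fun z => ?_, by simp [hqx], 1 - c / 2,
    by linarith, by linarith, fun z hz => ?_⟩
  · simpa using hcq z
  · simp only [ContinuousMap.sub_apply, ContinuousMap.one_apply, ContinuousMap.smul_apply,
      smul_eq_mul]
    nlinarith [hqT z hz]

theorem IsPosFunctional.exists_mem_posSupp_algRel [CompactSpace Y] [T2Space Y]
    {P Q : C(Y, ℝ) → ℝ} (hP : IsPosFunctional P) (hQ : IsPosFunctional Q)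
    (A : Subalgebra ℝ C(Y, ℝ)) (hPQ : ∀ h ∈ A, 0 ≤ h → P h = Q h) {x : Y}
    (hx : x ∈ posSupp P) : ∃ y ∈ posSupp Q, algRel A x y := by
  by_contra! hsep
  obtain ⟨r, hrA, hr0, hrx, θ, hθ0, hθ1, hrθ⟩ :=
    A.exists_peak_of_isCompact (isClosed_posSupp Q).isCompact hsep
  obtain ⟨θ', hθθ', hθ'1⟩ := exists_between hθ1
  have hθ' : 0 < θ' := hθ0.trans_lt hθθ'
  obtain ⟨g, hg, hgU, hPg⟩ := hx {z | θ' < r z} (isOpen_lt continuous_const r.continuous)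
    (by rwa [mem_ofPred_eq, hrx])
  have hbound : ∀ n : ℕ, P g ≤ ‖g‖ * Q 1 * (θ / θ') ^ (n + 1) := fun n => by
    have hrn : 0 ≤ r ^ (n + 1) := pow_nonneg hr0 _
    calc P g ≤ ‖g‖ / θ' ^ (n + 1) * P (r ^ (n + 1)) :=
          hP.map_le_div_mul_of_support_subset hg hrn hgU (pow_pos hθ' _)
            fun z (hz : θ' < r z) => by simpa using pow_le_pow_left₀ hθ'.le hz.le (n + 1)
      _ = ‖g‖ / θ' ^ (n + 1) * Q (r ^ (n + 1)) := by rw [hPQ _ (pow_mem hrA _) hrn]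
      _ ≤ ‖g‖ / θ' ^ (n + 1) * (θ ^ (n + 1) * Q 1) := by
          gcongr
          refine hQ.map_le_of_forall_posSupp_lt hrn (pow_nonneg hθ0 _) fun z hz => ?_
          simpa using pow_lt_pow_left₀ (hrθ z hz) (hr0 z) n.succ_ne_zero
      _ = ‖g‖ * Q 1 * (θ / θ') ^ (n + 1) := by rw [div_pow]; field_simp
  have hlim : Tendsto (fun n : ℕ => ‖g‖ * Q 1 * (θ / θ') ^ (n + 1)) atTop (𝓝 0) := by
    simpa using ((tendsto_pow_atTop_nhds_zero_of_lt_one (by positivity)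
      ((div_lt_one hθ').mpr hθθ')).comp (tendsto_add_atTop_nat 1)).const_mul (‖g‖ * Q 1)
  exact hPg.not_ge (ge_of_tendsto' hlim hbound)

end ContinuousFunctions

theorem Submodule.exists_dual_eq_norm_of_forall_norm_le_norm_sub {E : Type*}
    [NormedAddCommGroup E] [NormedSpace ℝ E] (S : Submodule ℝ E) {w : E}
    (hw : ∀ s ∈ S, ‖w‖ ≤ ‖w - s‖) :
    ∃ Λ : E →L[ℝ] ℝ, ‖Λ‖ ≤ 1 ∧ (∀ s ∈ S, Λ s = 0) ∧ Λ w = ‖w‖ := by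
  set S' := S.topologicalClosure
  obtain ⟨g, hg, hgw⟩ := exists_dual_vector'' ℝ (S'.mkQ w)
  have hmkQL : ‖S'.mkQL‖ ≤ 1 :=
    ContinuousLinearMap.opNorm_le_bound _ zero_le_one fun x => by
      simpa using Submodule.Quotient.norm_mk_le S' x
  have hnorm : ‖S'.mkQ w‖ = ‖w‖ := by
    refine le_antisymm (Submodule.Quotient.norm_mk_le S' w) ?_
    calc ‖w‖ ≤ Metric.infDist w S := (Metric.le_infDist ⟨0, S.zero_mem⟩).mpr fun s hs => by
          simpa [dist_eq_norm] using hw s hs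
      _ = Metric.infDist w S' := by
          rw [Submodule.topologicalClosure_coe, Metric.infDist_closure]
      _ = ‖S'.mkQ w‖ := (QuotientAddGroup.norm_mk (S := S'.toAddSubgroup) w).symm
  refine ⟨g.comp S'.mkQL, (g.opNorm_comp_le _).trans (mul_le_one₀ hg (norm_nonneg _) hmkQL),
    fun s hs => ?_, ?_⟩
  · simp [(Submodule.Quotient.mk_eq_zero S').mpr (S.le_topologicalClosure hs)]
  · change g (S'.mkQ w) = ‖w‖
    rw [hgw, hnorm]
    rfl

theorem sumSet_eq_coe_sup [TopologicalSpace X] (A₁ A₂ : Subalgebra ℝ C(X, ℝ)) :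
    sumSet A₁ A₂ = ↑(Subalgebra.toSubmodule A₁ ⊔ Subalgebra.toSubmodule A₂) := by
  ext u
  simp only [sumSet, mem_ofPred_eq, SetLike.mem_coe, Submodule.mem_sup]
  constructor <;> rintro ⟨a, ha, b, hb, rfl⟩ <;> exact ⟨a, ha, b, hb, rfl⟩

theorem exists_seq_mem_of_forall_exists_succ {α : Type*} {C : ℕ → Set α}
    {R : ℕ → α → α → Prop} (h0 : (C 0).Nonempty)
    (hstep : ∀ n, ∀ x ∈ C n, ∃ y ∈ C (n + 1), R n x y) :
    ∃ x : ℕ → α, (∀ n, x n ∈ C n) ∧ ∀ n, R n (x n) (x (n + 1)) := by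
  choose next hnext hR using hstep
  let seq : ∀ n, C n := fun n =>
    Nat.rec ⟨h0.some, h0.some_mem⟩ (fun n x => ⟨next n x x.2, hnext n x x.2⟩) n
  exact ⟨fun n => (seq n).1, fun n => (seq n).2, fun n => hR n _ (seq n).2⟩

theorem exists_isInfBolt_extremalSeq [TopologicalSpace X] [CompactSpace X] {R S : X → X → Prop}
    {w : C(X, ℝ)} (hw : 0 < ‖w‖) {Sp Sm : Set X} (hSp : Sp ⊆ {x | w x = ‖w‖})
    (hSm : Sm ⊆ {x | w x = -‖w‖}) (hne : Sp.Nonempty) (hR : ∀ x ∈ Sp, ∃ y ∈ Sm, R x y)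
    (hS : ∀ y ∈ Sm, ∃ x ∈ Sp, S y x) : ∃ x : ℕ → X, IsInfBolt R S x ∧ ExtremalSeq w x := by
  obtain ⟨x, hxC, hxR⟩ := exists_seq_mem_of_forall_exists_succ
    (C := fun n => if n % 2 = 0 then Sp else Sm) (R := fun n => if n % 2 = 0 then R else S)
    (by simpa using hne) fun n y hy => by
      rcases Nat.mod_two_eq_zero_or_one n with hn | hn
      · simpa [hn, Nat.succ_mod_two_eq_zero_iff] using hR y (by simpa [hn] using hy)
      · simpa [hn, Nat.succ_mod_two_eq_zero_iff] using hS y (by simpa [hn] using hy)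
  have hval : ∀ n, w (x n) = (-1) ^ n * ‖w‖ := fun n => by
    rcases Nat.even_or_odd n with hn | hn
    · simpa [hn.neg_one_pow] using hSp (by simpa [Nat.even_iff.mp hn] using hxC n)
    · simpa [hn.neg_one_pow] using hSm (by simpa [Nat.odd_iff.mp hn] using hxC n)
  refine ⟨x, Or.inl fun n => ⟨fun heq => ?_, hxR n⟩, Or.inl hval⟩
  have h := hval (n + 1)
  rw [← heq, hval n, pow_succ] at h
  have : (2 : ℝ) * ((-1) ^ n * ‖w‖) = 0 := by linarith
  simp [hw.ne'] at this

theorem stmt13_general [MetricSpace X] [CompactSpace X]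
    (A₁ A₂ : Subalgebra ℝ C(X, ℝ))
    (f u₀ : C(X, ℝ)) (hu₀ : u₀ ∈ sumSet A₁ A₂)
    (hf : f ∉ closure (sumSet A₁ A₂))
    (hbest : ∀ u ∈ sumSet A₁ A₂, ‖f - u₀‖ ≤ ‖f - u‖) :
    (∃ n : ℕ, ∃ x : Fin (2 * n) → X,
        IsClosedBolt (algRel A₁) (algRel A₂) x ∧ ExtremalFin (f - u₀) x) ∨
    (∃ x : ℕ → X,
        IsInfBolt (algRel A₁) (algRel A₂) x ∧ ExtremalSeq (f - u₀) x) := by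
  right
  set w := f - u₀
  have hw : 0 < ‖w‖ := norm_pos_iff.mpr fun h => hf (subset_closure (sub_eq_zero.mp h ▸ hu₀))
  rw [sumSet_eq_coe_sup] at hu₀ hbest
  obtain ⟨Λ, hΛ, hΛS, hΛw⟩ := Submodule.exists_dual_eq_norm_of_forall_norm_le_norm_sub _ (w := w)
    fun s hs => by simpa [w, sub_sub] using hbest (u₀ + s) (add_mem hu₀ hs)
  have hΛ₁ : ∀ h ∈ A₁, Λ h = 0 := fun h hh => hΛS h (Submodule.mem_sup_left hh)
  have hΛ₂ : ∀ h ∈ A₂, Λ h = 0 := fun h hh => hΛS h (Submodule.mem_sup_right hh)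
  have hΛ1 : Λ 1 = 0 := hΛ₁ 1 A₁.one_mem
  have hP := Λ.isPosFunctional_posVariation
  have hQ := (-Λ).isPosFunctional_posVariation
  refine exists_isInfBolt_extremalSeq hw (Λ.posSupp_posVariation_subset hΛ hΛ1 hΛw) ?_
    (hP.posSupp_nonempty w.norm_smul_one_add_nonneg ?_)
    (fun x hx => hP.exists_mem_posSupp_algRel hQ A₁ (fun h hh h0 => ?_) hx)
    (fun y hy => hQ.exists_mem_posSupp_algRel hP A₂ (fun h hh h0 => ?_) hy)
  · simpa [neg_eq_iff_eq_neg] using (-Λ).posSupp_posVariation_subset (w := -w)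
      (by rwa [ContinuousLinearMap.opNorm_neg]) (by simp [hΛ1])
      (by rw [neg_apply, map_neg, neg_neg, hΛw, norm_neg])
  · have := Λ.le_posVariation ⟨w.norm_smul_one_add_nonneg, le_rfl⟩
    rw [map_add, map_smul, hΛ1, hΛw, smul_zero, zero_add] at this
    exact hw.trans_le this
  · rw [Λ.posVariation_neg h0, hΛ₁ h hh, sub_zero]
  · rw [Λ.posVariation_neg h0, hΛ₂ h hh, sub_zero]

theorem stmt13 [MetricSpace X] [CompactSpace X]
    (A₁ A₂ : Subalgebra ℝ C(X, ℝ))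
    (hA₁ : IsClosed (A₁ : Set C(X, ℝ))) (hA₂ : IsClosed (A₂ : Set C(X, ℝ)))
    (f u₀ : C(X, ℝ)) (hu₀ : u₀ ∈ sumSet A₁ A₂)
    (hf : f ∉ closure (sumSet A₁ A₂))
    (hbest : ∀ u ∈ sumSet A₁ A₂, ‖f - u₀‖ ≤ ‖f - u‖) :
    (∃ n : ℕ, ∃ x : Fin (2 * n) → X,
        IsClosedBolt (algRel A₁) (algRel A₂) x ∧ ExtremalFin (f - u₀) x) ∨
    (∃ x : ℕ → X,
        IsInfBolt (algRel A₁) (algRel A₂) x ∧ ExtremalSeq (f - u₀) x) :=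
  stmt13_general A₁ A₂ f u₀ hu₀ hf hbest
end

section
/- Let X be a compact metric space, A₁, A₂ closed subalgebras of C(X) containing constants, and μ a regular Borel signed measure annihilating A₁ + A₂ with μ ≠ 0 and Jordan decomposition μ = μ⁺ − μ⁻. Then for every x₀ ∈ supp(μ⁺) there exists x₁ ∈ supp(μ⁻) with s(x₁) = s(x₀), where s is the quotient map induced by A₁. -/
/-!
Suppose no point of `supp μ⁻` has the same `A₁`-values as `x₀`. By compactness of `supp μ⁻`,
`A₁` contains a function `g ≥ 0` with `g ≤ r` on `supp μ⁻` and `g x₀ > r`. Since `μ` annihilates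
`A₁`, the measures `μ⁺` and `μ⁻` have the same moments `∫ gⁿ`; for `s > r` this gives
`sⁿ μ⁺{g > s} ≤ rⁿ μ⁻(X)`, so `μ⁺{g > r} = 0`, which contradicts `x₀ ∈ supp μ⁺`.
-/

open scoped BigOperators

universe u

variable {X : Type u}

open MeasureTheory Filter Topology

theorem measSupport_eq_support {α : Type*} [TopologicalSpace α] [MeasurableSpace α]
    (m : Measure α) : measSupport m = m.support := by
  rw [Measure.support_eq_forall_isOpen]
  ext x
  exact ⟨fun h U hxU hU => h U hU hxU, fun h U hU hxU => h U hxU hU⟩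

namespace Subalgebra

variable [TopologicalSpace X] (A : Subalgebra ℝ C(X, ℝ)) {x₀ : X}

theorem exists_nonneg_vanishing_pos_of_ne {y : X} {v : C(X, ℝ)} (hv : v ∈ A)
    (hvy : v y ≠ v x₀) : ∃ f ∈ A, (∀ z, 0 ≤ f z) ∧ f x₀ = 0 ∧ 0 < f y := by
  refine ⟨(v - algebraMap ℝ C(X, ℝ) (v x₀)) ^ 2,
    pow_mem (sub_mem hv (A.algebraMap_mem _)) 2, fun z => ?_, ?_, ?_⟩
  · simp [sq_nonneg]
  · simp
  · simpa using sq_pos_of_ne_zero (sub_ne_zero.mpr hvy)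

theorem exists_nonneg_vanishing_pos_on_of_separates {K : Set X} (hK : IsCompact K)
    (hsep : ∀ y ∈ K, ∃ v ∈ A, v y ≠ v x₀) :
    ∃ f ∈ A, (∀ z, 0 ≤ f z) ∧ f x₀ = 0 ∧ ∀ z ∈ K, 0 < f z := by
  have hloc : ∀ y ∈ K, ∃ f ∈ A, (∀ z, 0 ≤ f z) ∧ f x₀ = 0 ∧ 0 < f y := fun y hy =>
    let ⟨v, hv, hvy⟩ := hsep y hy
    A.exists_nonneg_vanishing_pos_of_ne hv hvy
  choose! F hFA hF0 hFx₀ hFy using hloc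
  obtain ⟨t, htK, hKt⟩ := hK.elim_nhds_subcover (fun y => {z | 0 < F y z})
    fun y hy => (isOpen_lt continuous_const (F y).continuous).mem_nhds (hFy y hy)
  refine ⟨∑ y ∈ t, F y, sum_mem fun y hy => hFA y (htK y hy), fun z => ?_, ?_, fun z hz => ?_⟩
  · simpa using Finset.sum_nonneg fun y hy => hF0 y (htK y hy) z
  · simpa using Finset.sum_eq_zero fun y hy => hFx₀ y (htK y hy)
  · obtain ⟨y, hyt, hzy⟩ := Set.mem_iUnion₂.mp (hKt hz)
    simpa using Finset.sum_pos' (fun y hy => hF0 y (htK y hy) z) ⟨y, hyt, hzy⟩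

theorem exists_nonneg_gt_on_of_separates [CompactSpace X] {K : Set X} (hK : IsCompact K)
    (hsep : ∀ y ∈ K, ∃ v ∈ A, v y ≠ v x₀) :
    ∃ g ∈ A, (∀ z, 0 ≤ g z) ∧ ∃ r, 0 ≤ r ∧ (∀ z ∈ K, g z ≤ r) ∧ r < g x₀ := by
  obtain ⟨f, hfA, -, hfx₀, hfK⟩ := A.exists_nonneg_vanishing_pos_on_of_separates hK hsep
  obtain ⟨c, hc, hcK⟩ := hK.exists_forall_le' f.continuous.continuousOn hfK
  have hfle : ∀ z, f z ≤ ‖f‖ := fun z => (le_abs_self _).trans (f.norm_coe_le_norm z)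
  set g := algebraMap ℝ C(X, ℝ) (‖f‖ + c) - f
  have hg : ∀ z, g z = ‖f‖ + c - f z := fun z => by simp [g]
  refine ⟨g, sub_mem (A.algebraMap_mem _) hfA, fun z => ?_, ‖f‖, norm_nonneg f, fun z hz => ?_, ?_⟩
  · linarith [hg z, hfle z]
  · linarith [hg z, hcK z hz]
  · linarith [hg x₀]

end Subalgebra

section PowerMoments

variable [TopologicalSpace X] [CompactSpace X] [MeasurableSpace X] [OpensMeasurableSpace X]
  {μ ν : Measure X} [IsFiniteMeasure μ] [IsFiniteMeasure ν] {g : X → ℝ} {r : ℝ}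

theorem pow_mul_measureReal_le_of_integral_pow_eq (hg : Continuous g) (hg0 : ∀ z, 0 ≤ g z)
    (hgr : ∀ᵐ z ∂ν, g z ≤ r) (hpow : ∀ n : ℕ, ∫ z, g z ^ n ∂μ = ∫ z, g z ^ n ∂ν)
    {s : ℝ} (hs : 0 ≤ s) (n : ℕ) : s ^ n * μ.real {z | s < g z} ≤ r ^ n * ν.real Set.univ := by
  have hint : ∀ m : Measure X, [IsFiniteMeasure m] → Integrable (fun z => g z ^ n) m :=
    fun m _ => (hg.pow n).integrable_of_hasCompactSupport (HasCompactSupport.of_compactSpace _)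
  calc s ^ n * μ.real {z | s < g z}
      ≤ s ^ n * μ.real {z | s ^ n ≤ g z ^ n} := by
        gcongr
        · finiteness
        · exact fun hz => pow_le_pow_left₀ hs (le_of_lt hz) n
    _ ≤ ∫ z, g z ^ n ∂μ :=
        mul_meas_ge_le_integral_of_nonneg (.of_forall fun z => pow_nonneg (hg0 z) n) (hint μ) _
    _ = ∫ z, g z ^ n ∂ν := hpow n
    _ ≤ ∫ _, r ^ n ∂ν :=
        integral_mono_ae (hint ν) (integrable_const _)
          (hgr.mono fun z hz => pow_le_pow_left₀ (hg0 z) hz n)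
    _ = r ^ n * ν.real Set.univ := by rw [integral_const, smul_eq_mul, mul_comm]

theorem measure_lt_eq_zero_of_lt_of_integral_pow_eq (hg : Continuous g) (hg0 : ∀ z, 0 ≤ g z)
    (hr : 0 ≤ r) (hgr : ∀ᵐ z ∂ν, g z ≤ r) (hpow : ∀ n : ℕ, ∫ z, g z ^ n ∂μ = ∫ z, g z ^ n ∂ν)
    {s : ℝ} (hrs : r < s) : μ {z | s < g z} = 0 := by
  have hs : 0 < s := hr.trans_lt hrs
  have hq0 : 0 ≤ r / s := div_nonneg hr hs.le
  have hq1 : r / s < 1 := (div_lt_one hs).mpr hrs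
  have hbound : ∀ n : ℕ, μ.real {z | s < g z} ≤ (r / s) ^ n * ν.real Set.univ := fun n => by
    rw [div_pow, div_mul_eq_mul_div, le_div_iff₀ (pow_pos hs n), mul_comm]
    exact pow_mul_measureReal_le_of_integral_pow_eq hg hg0 hgr hpow hs.le n
  have hlim : Tendsto (fun n : ℕ => (r / s) ^ n * ν.real Set.univ) atTop (𝓝 0) := by
    simpa using (tendsto_pow_atTop_nhds_zero_of_lt_one hq0 hq1).mul_const (ν.real Set.univ)
  have hle : μ.real {z | s < g z} ≤ 0 := ge_of_tendsto' hlim hbound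
  exact (measureReal_eq_zero_iff (measure_ne_top _ _)).mp (le_antisymm hle measureReal_nonneg)

theorem measure_lt_eq_zero_of_integral_pow_eq (hg : Continuous g) (hg0 : ∀ z, 0 ≤ g z)
    (hr : 0 ≤ r) (hgr : ∀ᵐ z ∂ν, g z ≤ r) (hpow : ∀ n : ℕ, ∫ z, g z ^ n ∂μ = ∫ z, g z ^ n ∂ν) :
    μ {z | r < g z} = 0 := by
  have hcover : {z | r < g z} ⊆ ⋃ n : ℕ, {z | r + 1 / (n + 1) < g z} := fun z (hz : r < g z) => by
    obtain ⟨n, hn⟩ := exists_nat_one_div_lt (sub_pos.mpr hz)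
    exact Set.mem_iUnion.mpr ⟨n, show r + 1 / (n + 1) < g z by linarith⟩
  refine measure_mono_null hcover (measure_iUnion_null fun n => ?_)
  exact measure_lt_eq_zero_of_lt_of_integral_pow_eq hg hg0 hr hgr hpow
    (lt_add_of_pos_right r Nat.one_div_pos_of_nat)

end PowerMoments

theorem stmt15_general [MetricSpace X] [CompactSpace X] [MeasurableSpace X] [BorelSpace X]
    (A₁ A₂ : Subalgebra ℝ C(X, ℝ))
    (μ : MeasureTheory.SignedMeasure X)
    (hann : ∀ v₁ ∈ A₁, ∀ v₂ ∈ A₂, ssint μ (fun x => v₁ x + v₂ x) = 0) :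
    ∀ x₀ ∈ measSupport μ.toJordanDecomposition.posPart,
      ∃ x₁ ∈ measSupport μ.toJordanDecomposition.negPart,
        ∀ v ∈ A₁, v x₁ = v x₀ := by
  intro x₀ hx₀
  set μp := μ.toJordanDecomposition.posPart
  set μn := μ.toJordanDecomposition.negPart
  have hA₁ : ∀ v ∈ A₁, ∫ x, v x ∂μp = ∫ x, v x ∂μn := fun v hv => by
    simpa [ssint, sub_eq_zero] using hann v hv 0 A₂.zero_mem
  rw [measSupport_eq_support] at hx₀ ⊢
  by_contra! hsep
  obtain ⟨g, hgA, hg0, r, hr, hgr, hrx₀⟩ :=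
    A₁.exists_nonneg_gt_on_of_separates Measure.isClosed_support.isCompact hsep
  have hnull : μp {z | r < g z} = 0 :=
    measure_lt_eq_zero_of_integral_pow_eq g.continuous hg0 hr
      (mem_of_superset Measure.support_mem_ae hgr) fun n => by simpa using hA₁ _ (pow_mem hgA n)
  exact ((Measure.mem_support_iff_forall x₀).mp hx₀ _
    ((isOpen_lt continuous_const g.continuous).mem_nhds hrx₀)).ne' hnull

theorem stmt15 [MetricSpace X] [CompactSpace X] [MeasurableSpace X] [BorelSpace X]
    (A₁ A₂ : Subalgebra ℝ C(X, ℝ))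
    (hA₁ : IsClosed (A₁ : Set C(X, ℝ))) (hA₂ : IsClosed (A₂ : Set C(X, ℝ)))
    (μ : MeasureTheory.SignedMeasure X) (hreg : μ.totalVariation.Regular)
    (hμ : μ ≠ 0)
    (hann : ∀ v₁ ∈ A₁, ∀ v₂ ∈ A₂, ssint μ (fun x => v₁ x + v₂ x) = 0) :
    ∀ x₀ ∈ measSupport μ.toJordanDecomposition.posPart,
      ∃ x₁ ∈ measSupport μ.toJordanDecomposition.negPart,
        ∀ v ∈ A₁, v x₁ = v x₀ :=
  stmt15_general A₁ A₂ μ hann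
end

section
/- Let X be a compact metric space and A₁, A₂ closed subalgebras of C(X) containing constants. If {x₁, x₂, …} is an infinite bolt with respect to A₁, A₂, r_k the bolt functional of the truncated bolt {x₁,…,x_k}, and r* a weak* cluster point in C(X)* of the sequence (r_k), then r* annihilates A₁ + A₂ and ‖r*‖ ≤ 1. -/
open scoped BigOperators

universe u

variable {X : Type u}

lemma sum_even_pair [MetricSpace X] [CompactSpace X] (v : C(X, ℝ)) (x : ℕ → X)
    (hv : ∀ i, i % 2 = 0 → v (x i) = v (x (i + 1))) (k : ℕ) :
    |∑ i ∈ Finset.range k, (-1 : ℝ) ^ i * v (x i)| ≤ 2 * ‖v‖ := by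
  have hb : ∀ y : X, |v y| ≤ ‖v‖ := fun y => by simpa using v.norm_coe_le_norm y
  have key : ∀ m, ∑ i ∈ Finset.range (2 * m), (-1 : ℝ) ^ i * v (x i) = 0 := by
    intro m
    induction m with
    | zero => simp
    | succ n ih =>
      have h2 : 2 * (n + 1) = (2 * n) + 1 + 1 := by ring
      rw [h2, Finset.sum_range_succ, Finset.sum_range_succ, ih]
      have e0 : ((-1 : ℝ)) ^ (2 * n) = 1 := by rw [pow_mul]; norm_num
      have e1 : ((-1 : ℝ)) ^ (2 * n + 1) = -1 := by rw [pow_succ, e0]; norm_num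
      rw [e0, e1, hv (2 * n) (by omega)]; ring
  rcases Nat.even_or_odd k with ⟨m, hm⟩ | ⟨m, hm⟩
  · rw [hm, show m + m = 2 * m by ring, key m, abs_zero]
    positivity
  · rw [hm, Finset.sum_range_succ, key m, zero_add]
    have e0 : ((-1 : ℝ)) ^ (2 * m) = 1 := by rw [pow_mul]; norm_num
    rw [e0, one_mul]
    calc |v (x (2 * m))| ≤ ‖v‖ := hb _
      _ ≤ 2 * ‖v‖ := by nlinarith [norm_nonneg v]

lemma sum_odd_pair [MetricSpace X] [CompactSpace X] (v : C(X, ℝ)) (x : ℕ → X)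
    (hv : ∀ i, i % 2 = 1 → v (x i) = v (x (i + 1))) (k : ℕ) :
    |∑ i ∈ Finset.range k, (-1 : ℝ) ^ i * v (x i)| ≤ 2 * ‖v‖ := by
  have hb : ∀ y : X, |v y| ≤ ‖v‖ := fun y => by simpa using v.norm_coe_le_norm y
  have key : ∀ m, ∑ i ∈ Finset.range (2 * m + 1), (-1 : ℝ) ^ i * v (x i) = v (x 0) := by
    intro m
    induction m with
    | zero => simp
    | succ n ih =>
      have h2 : 2 * (n + 1) + 1 = (2 * n + 1) + 1 + 1 := by ring
      rw [h2, Finset.sum_range_succ, Finset.sum_range_succ, ih]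
      have e0 : ((-1 : ℝ)) ^ (2 * n) = 1 := by rw [pow_mul]; norm_num
      have e1 : ((-1 : ℝ)) ^ (2 * n + 1) = -1 := by rw [pow_succ, e0]; norm_num
      have e2 : ((-1 : ℝ)) ^ (2 * n + 1 + 1) = 1 := by rw [pow_succ, e1]; norm_num
      rw [e1, e2, ← hv (2 * n + 1) (by omega)]; ring
  rcases Nat.even_or_odd k with ⟨m, hm⟩ | ⟨m, hm⟩
  · rcases Nat.eq_zero_or_pos m with rfl | hm0
    · rw [show k = 0 by omega, Finset.range_zero, Finset.sum_empty, abs_zero]; positivity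
    · have hk : k = 2 * (m - 1) + 1 + 1 := by omega
      rw [hk, Finset.sum_range_succ, key (m - 1)]
      have habs : |(-1 : ℝ) ^ (2 * (m - 1) + 1) * v (x (2 * (m - 1) + 1))| ≤ ‖v‖ := by
        rw [abs_mul, abs_pow, abs_neg, abs_one, one_pow, one_mul]; exact hb _
      calc |v (x 0) + (-1 : ℝ) ^ (2 * (m - 1) + 1) * v (x (2 * (m - 1) + 1))|
          ≤ |v (x 0)| + |(-1 : ℝ) ^ (2 * (m - 1) + 1) * v (x (2 * (m - 1) + 1))| := abs_add_le _ _
        _ ≤ ‖v‖ + ‖v‖ := add_le_add (hb _) habs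
        _ = 2 * ‖v‖ := by ring
  · rw [hm, key m]
    calc |v (x 0)| ≤ ‖v‖ := hb _
      _ ≤ 2 * ‖v‖ := by nlinarith [norm_nonneg v]

open Filter in
lemma cluster_eval [MetricSpace X] [CompactSpace X]
    (r : ℕ → WeakDual ℝ C(X, ℝ)) (rs : WeakDual ℝ C(X, ℝ))
    (hcl : MapClusterPt rs Filter.atTop r) (F : C(X, ℝ)) :
    ∃ ψ : ℕ → ℕ, StrictMono ψ ∧
      Tendsto (fun k => r (ψ k) F) atTop (nhds (rs F)) := by
  have h1 : MapClusterPt (rs F) atTop (fun k => r k F) :=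
    hcl.continuousAt_comp (WeakDual.eval_continuous F).continuousAt
  obtain ⟨ψ, hψ, ht⟩ := TopologicalSpace.FirstCountableTopology.tendsto_subseq h1
  exact ⟨ψ, hψ, ht⟩


theorem stmt17 [MetricSpace X] [CompactSpace X]
    (A₁ A₂ : Subalgebra ℝ C(X, ℝ))
    (hA₁ : IsClosed (A₁ : Set C(X, ℝ))) (hA₂ : IsClosed (A₂ : Set C(X, ℝ)))
    (x : ℕ → X) (hbolt : IsInfBolt (algRel A₁) (algRel A₂) x)
    (r : ℕ → WeakDual ℝ C(X, ℝ))
    (hr : ∀ k : ℕ, 0 < k → ∀ F : C(X, ℝ),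
      r k F = (1 / (k : ℝ)) * ∑ i ∈ Finset.range k, (-1 : ℝ) ^ i * F (x i))
    (rs : WeakDual ℝ C(X, ℝ)) (hcl : MapClusterPt rs Filter.atTop r) :
    (∀ v₁ ∈ A₁, ∀ v₂ ∈ A₂, rs (v₁ + v₂) = 0) ∧ ∀ F : C(X, ℝ), |rs F| ≤ ‖F‖ := by
  constructor
  · intro v₁ hv₁ v₂ hv₂
    obtain ⟨ψ, hψ, ht⟩ := cluster_eval r rs hcl (v₁ + v₂)
    -- partial sum bounds for v₁ and v₂
    have hsums : ∀ k : ℕ, |∑ i ∈ Finset.range k, (-1 : ℝ) ^ i * v₁ (x i)| ≤ 2 * ‖v₁‖ ∧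
        |∑ i ∈ Finset.range k, (-1 : ℝ) ^ i * v₂ (x i)| ≤ 2 * ‖v₂‖ := by
      intro k
      rcases hbolt with h | h
      · refine ⟨sum_even_pair v₁ x (fun i hi => ?_) k, sum_odd_pair v₂ x (fun i hi => ?_) k⟩
        · have := (h i).2; rw [if_pos hi] at this; exact this v₁ hv₁
        · have := (h i).2; rw [if_neg (by omega)] at this; exact this v₂ hv₂
      · refine ⟨sum_odd_pair v₁ x (fun i hi => ?_) k, sum_even_pair v₂ x (fun i hi => ?_) k⟩
        · have := (h i).2; rw [if_neg (by omega)] at this; exact this v₁ hv₁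
        · have := (h i).2; rw [if_pos hi] at this; exact this v₂ hv₂
    set C : ℝ := 2 * ‖v₁‖ + 2 * ‖v₂‖ with hC
    have hbound : ∀ k : ℕ, 0 < k → |r k (v₁ + v₂)| ≤ C / k := by
      intro k hk
      rw [hr k hk]
      have hsplit : ∑ i ∈ Finset.range k, (-1 : ℝ) ^ i * (v₁ + v₂) (x i) =
          (∑ i ∈ Finset.range k, (-1 : ℝ) ^ i * v₁ (x i)) +
          (∑ i ∈ Finset.range k, (-1 : ℝ) ^ i * v₂ (x i)) := by
        rw [← Finset.sum_add_distrib]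
        refine Finset.sum_congr rfl fun i _ => ?_
        simp [ContinuousMap.add_apply]; ring
      rw [hsplit, abs_mul]
      have hks : (0 : ℝ) < k := by exact_mod_cast hk
      have h1 : |(1 : ℝ) / k| = 1 / k := abs_of_pos (by positivity)
      rw [h1]
      have h2 : |(∑ i ∈ Finset.range k, (-1 : ℝ) ^ i * v₁ (x i)) +
          (∑ i ∈ Finset.range k, (-1 : ℝ) ^ i * v₂ (x i))| ≤ C := by
        calc _ ≤ _ := abs_add_le _ _
          _ ≤ C := add_le_add (hsums k).1 (hsums k).2
      rw [div_eq_mul_inv C, mul_comm C, ← one_div]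
      exact mul_le_mul_of_nonneg_left h2 (by positivity)
    have h0 : Filter.Tendsto (fun k => r k (v₁ + v₂)) Filter.atTop (nhds 0) := by
      apply squeeze_zero_norm' (a := fun k : ℕ => C / k)
      · filter_upwards [Filter.eventually_ge_atTop 1] with k hk
        simpa [Real.norm_eq_abs] using hbound k hk
      · exact tendsto_const_div_atTop_nhds_zero_nat C
    have h0' : Filter.Tendsto (fun k => r (ψ k) (v₁ + v₂)) Filter.atTop (nhds 0) :=
      h0.comp hψ.tendsto_atTop
    exact tendsto_nhds_unique ht h0'
  · intro F
    obtain ⟨ψ, hψ, ht⟩ := cluster_eval r rs hcl F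
    have hbd : ∀ k : ℕ, 0 < k → |r k F| ≤ ‖F‖ := by
      intro k hk
      rw [hr k hk, abs_mul]
      have hks : (0 : ℝ) < k := by exact_mod_cast hk
      have h1 : |(1 : ℝ) / k| = 1 / k := abs_of_pos (by positivity)
      have h2 : |∑ i ∈ Finset.range k, (-1 : ℝ) ^ i * F (x i)| ≤ k * ‖F‖ := by
        calc |∑ i ∈ Finset.range k, (-1 : ℝ) ^ i * F (x i)|
            ≤ ∑ i ∈ Finset.range k, |(-1 : ℝ) ^ i * F (x i)| := Finset.abs_sum_le_sum_abs _ _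
          _ ≤ ∑ _i ∈ Finset.range k, ‖F‖ := by
              refine Finset.sum_le_sum fun i _ => ?_
              rw [abs_mul, abs_pow, abs_neg, abs_one, one_pow, one_mul]
              simpa using F.norm_coe_le_norm (x i)
          _ = k * ‖F‖ := by rw [Finset.sum_const, Finset.card_range]; simp
      rw [h1]
      calc 1 / (k : ℝ) * |∑ i ∈ Finset.range k, (-1 : ℝ) ^ i * F (x i)|
          ≤ 1 / (k : ℝ) * (k * ‖F‖) := mul_le_mul_of_nonneg_left h2 (by positivity)
        _ = ‖F‖ := by field_simp
    have htabs : Filter.Tendsto (fun k => |r (ψ k) F|) Filter.atTop (nhds |rs F|) :=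
      ht.abs
    refine le_of_tendsto htabs ?_
    filter_upwards [Filter.eventually_ge_atTop 1] with k hk
    have hle : k ≤ ψ k := hψ.le_apply
    exact hbd (ψ k) (by omega)
end
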